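/- arXiv:0804.3964 — 6 statements merged into one kernel-verified Lean document; each statement's English description precedes it below -/
import Mathlib

section
/- Let (L,·,1) be a loop with centre Z(L), and let 𝔐 be its multiplication group with centre Z(𝔐). Then Z(𝔐) = {L(a) : a ∈ Z(L)}, the map a ↦ L(a) is a group isomorphism of Z(L) onto Z(𝔐), and Z(L) = {φ(1) : φ ∈ Z(𝔐)}. -/
/-!  Basic theory of loops, commutative Moufang loops, their multiplication
groups, subloops, Frattini subloops, normality and normalizers. -/

universe u v

/-- A loop: a quasigroup with a two-sided identity element.
`ldiv a b` is the unique solution `x` of `a * x = b`, and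
`rdiv b a` is the unique solution `y` of `y * a = b`. -/
class MLoop (α : Type u) extends Mul α, One α where
  ldiv : α → α → α
  rdiv : α → α → α
  mul_ldiv : ∀ a b : α, a * ldiv a b = b
  ldiv_mul : ∀ a b : α, ldiv a (a * b) = b
  rdiv_mul : ∀ a b : α, rdiv b a * a = b
  mul_rdiv : ∀ a b : α, rdiv (b * a) a = b
  one_mul : ∀ a : α, 1 * a = a
  mul_one : ∀ a : α, a * 1 = a

/-- A commutative Moufang loop: a commutative loop satisfying the identity
`x² · (y·z) = (x·y) · (x·z)`. -/
class CommMoufangLoop (α : Type u) extends MLoop α where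
  mul_comm : ∀ a b : α, a * b = b * a
  moufang : ∀ x y z : α, (x * x) * (y * z) = (x * y) * (x * z)

namespace MLoop

variable {α : Type u} [MLoop α]

/-- The left translation `L(x) : y ↦ x·y`, as a permutation of the loop. -/
def leftTrans (x : α) : Equiv.Perm α where
  toFun y := x * y
  invFun y := ldiv x y
  left_inv y := ldiv_mul x y
  right_inv y := mul_ldiv x y

/-- The right translation `R(x) : y ↦ y·x`, as a permutation of the loop. -/
def rightTrans (x : α) : Equiv.Perm α where
  toFun y := y * x
  invFun y := rdiv y x
  left_inv y := mul_rdiv x y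
  right_inv y := rdiv_mul x y

/-- Powers in a loop (unambiguous in diassociative loops such as CML). -/
def pow (x : α) : ℕ → α
  | 0 => 1
  | n + 1 => x * pow x n

end MLoop

/-- The multiplication group of a loop: the subgroup of the permutation group
generated by all left and right translations. -/
def multGroup (α : Type u) [MLoop α] : Subgroup (Equiv.Perm α) :=
  Subgroup.closure (Set.range MLoop.leftTrans ∪ Set.range MLoop.rightTrans)

/-- The centre of a loop: all elements commuting and associating with
all elements. -/
def loopCenter (α : Type u) [MLoop α] : Set α :=
  {x | ∀ a b : α, a * x = x * a ∧ (a * b) * x = a * (b * x) ∧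
       (a * x) * b = a * (x * b) ∧ (x * a) * b = x * (a * b)}

/-- The associator `(a,b,c)`, defined by `(a·b)·c = (a·(b·c))·(a,b,c)`. -/
def loopAssociator {α : Type u} [MLoop α] (a b c : α) : α :=
  MLoop.ldiv (a * (b * c)) ((a * b) * c)

/-- The left coset `x·S` of a subset of a loop. -/
def lcoset {α : Type u} [MLoop α] (x : α) (S : Set α) : Set α :=
  (fun y => x * y) '' S

/-- A subloop: a subset containing `1` and closed under multiplication and
both divisions. -/
structure Subloop (α : Type u) [MLoop α] where
  carrier : Set α
  one_mem' : (1 : α) ∈ carrier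
  mul_mem' : ∀ {a b : α}, a ∈ carrier → b ∈ carrier → a * b ∈ carrier
  ldiv_mem' : ∀ {a b : α}, a ∈ carrier → b ∈ carrier → MLoop.ldiv a b ∈ carrier
  rdiv_mem' : ∀ {a b : α}, a ∈ carrier → b ∈ carrier → MLoop.rdiv a b ∈ carrier

namespace Subloop

variable {α : Type u} [MLoop α]

instance : SetLike (Subloop α) α where
  coe := Subloop.carrier
  coe_injective := by
    intro H K h
    cases H; cases K; congr

instance : PartialOrder (Subloop α) := .ofSetLike (Subloop α) α

instance : Top (Subloop α) :=
  ⟨{ carrier := Set.univ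
     one_mem' := trivial
     mul_mem' := fun _ _ => trivial
     ldiv_mem' := fun _ _ => trivial
     rdiv_mem' := fun _ _ => trivial }⟩

instance : Bot (Subloop α) :=
  ⟨{ carrier := {1}
     one_mem' := rfl
     mul_mem' := by
       rintro a b (rfl : a = 1) (rfl : b = 1)
       exact MLoop.mul_one 1
     ldiv_mem' := by
       rintro a b (rfl : a = 1) (rfl : b = 1)
       have h := MLoop.ldiv_mul (1 : α) 1
       rw [MLoop.mul_one] at h
       exact h
     rdiv_mem' := by
       rintro a b (rfl : a = 1) (rfl : b = 1)
       have h := MLoop.mul_rdiv (1 : α) 1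
       rw [MLoop.mul_one] at h
       exact h }⟩

/-- A subloop is itself a loop. -/
instance (H : Subloop α) : MLoop H where
  mul a b := ⟨a.1 * b.1, H.mul_mem' a.2 b.2⟩
  one := ⟨1, H.one_mem'⟩
  ldiv a b := ⟨MLoop.ldiv a.1 b.1, H.ldiv_mem' a.2 b.2⟩
  rdiv a b := ⟨MLoop.rdiv a.1 b.1, H.rdiv_mem' a.2 b.2⟩
  mul_ldiv a b := Subtype.ext (MLoop.mul_ldiv a.1 b.1)
  ldiv_mul a b := Subtype.ext (MLoop.ldiv_mul a.1 b.1)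
  rdiv_mul a b := Subtype.ext (MLoop.rdiv_mul a.1 b.1)
  mul_rdiv a b := Subtype.ext (MLoop.mul_rdiv a.1 b.1)
  one_mul a := Subtype.ext (MLoop.one_mul a.1)
  mul_one a := Subtype.ext (MLoop.mul_one a.1)

/-- The membership closure of a set in a loop. -/
inductive InClosure (S : Set α) : α → Prop
  | of {x : α} : x ∈ S → InClosure S x
  | one : InClosure S 1
  | mul {a b : α} : InClosure S a → InClosure S b → InClosure S (a * b)
  | ldiv {a b : α} : InClosure S a → InClosure S b → InClosure S (MLoop.ldiv a b)
  | rdiv {a b : α} : InClosure S a → InClosure S b → InClosure S (MLoop.rdiv a b)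

/-- The subloop generated by a subset: the smallest subloop containing it. -/
def closure (S : Set α) : Subloop α where
  carrier := {x | InClosure S x}
  one_mem' := InClosure.one
  mul_mem' := InClosure.mul
  ldiv_mem' := InClosure.ldiv
  rdiv_mem' := InClosure.rdiv

end Subloop

/-- A subloop of a commutative Moufang loop is a commutative Moufang loop. -/
instance {α : Type u} [CommMoufangLoop α] (H : Subloop α) : CommMoufangLoop H where
  mul_comm a b := Subtype.ext (CommMoufangLoop.mul_comm a.1 b.1)
  moufang x y z := Subtype.ext (CommMoufangLoop.moufang x.1 y.1 z.1)

/-- The Frattini subloop: the set of non-generators of the loop.  (If the loop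
has maximal proper subloops this is their intersection, otherwise it is the
whole loop.) -/
def frattiniSubloop (α : Type u) [MLoop α] : Set α :=
  {x | ∀ S : Set α,
    (Subloop.closure (insert x S) : Set α) = Set.univ →
    (Subloop.closure S : Set α) = Set.univ}

/-- The associator subloop `L′`: the subloop generated by all associators. -/
def assocSubloop (α : Type u) [MLoop α] : Subloop α :=
  Subloop.closure {x | ∃ a b c : α, x = loopAssociator a b c}

/-- Normality of the subloop `H` in the subloop `K` of a commutative Moufang
loop: `H ⊆ K` and `x·(y·H) = (x·y)·H` for all `x, y ∈ K` (for a CML this is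
equivalent to invariance of `H` under all inner mappings of `K`). -/
def Subloop.IsNormalIn {α : Type u} [CommMoufangLoop α] (H K : Subloop α) : Prop :=
  H ≤ K ∧ ∀ x ∈ K, ∀ y ∈ K,
    lcoset x (lcoset y (H : Set α)) = lcoset (x * y) (H : Set α)

/-- A commutative Moufang loop satisfies the normalizer condition if every
proper subloop is properly contained in a subloop in which it is normal. -/
def LoopNormalizerCondition (α : Type u) [CommMoufangLoop α] : Prop :=
  ∀ H : Subloop α, H ≠ ⊤ → ∃ K : Subloop α, H < K ∧ H.IsNormalIn K

/-- The inner mapping group: the stabilizer of `1` in the multiplication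
group. -/
def innerGroup (α : Type u) [MLoop α] : Subgroup ↥(multGroup α) :=
  Subgroup.comap (multGroup α).subtype (MulAction.stabilizer (Equiv.Perm α) (1 : α))

/-- The upper central series of a commutative Moufang loop:
`Z₀ = {1}` and `Z_{i+1}/Z_i = Z(L/Z_i)`, i.e. `x ∈ Z_{i+1}` iff all
associators involving `x` lie in `Z_i`. -/
def upperCentral (α : Type u) [CommMoufangLoop α] : ℕ → Set α
  | 0 => {1}
  | n + 1 => {x | ∀ a b : α,
      loopAssociator a b x ∈ upperCentral α n ∧
      loopAssociator a x b ∈ upperCentral α n ∧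
      loopAssociator x a b ∈ upperCentral α n}

/-- The second centre `Z₂(L)`, defined by `Z₂(L)/Z(L) = Z(L/Z(L))`:
the set of `x` all of whose associators lie in the centre. -/
def secondCenter (α : Type u) [CommMoufangLoop α] : Set α :=
  {x | ∀ a b : α,
    loopAssociator a b x ∈ loopCenter α ∧
    loopAssociator a x b ∈ loopCenter α ∧
    loopAssociator x a b ∈ loopCenter α}

/-- A divisible subgroup: every element has `n`-th roots inside the subgroup
for all `n ≥ 1`. -/
def DivisibleSubgroup {G : Type u} [Group G] (H : Subgroup G) : Prop :=
  ∀ a ∈ H, ∀ n : ℕ, 1 ≤ n → ∃ x ∈ H, x ^ n = a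

/-- A reduced subgroup: one containing no nontrivial divisible subgroup. -/
def ReducedSubgroup {G : Type u} [Group G] (H : Subgroup G) : Prop :=
  ∀ K : Subgroup G, K ≤ H → DivisibleSubgroup K → K = ⊥


section Prop1Aux

variable {α : Type u} [MLoop α]

lemma leftTrans_apply' (x y : α) : (MLoop.leftTrans x) y = x * y := rfl

lemma rightTrans_apply' (x y : α) : (MLoop.rightTrans x) y = y * x := rfl

lemma leftTrans_mem_multGroup (x : α) : MLoop.leftTrans x ∈ multGroup α :=
  Subgroup.subset_closure (Or.inl ⟨x, rfl⟩)

lemma rightTrans_mem_multGroup (x : α) : MLoop.rightTrans x ∈ multGroup α :=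
  Subgroup.subset_closure (Or.inr ⟨x, rfl⟩)

lemma leftTrans_comm_of_center {a : α} (ha : a ∈ loopCenter α)
    {h : Equiv.Perm α} (hh : h ∈ multGroup α) :
    h * MLoop.leftTrans a = MLoop.leftTrans a * h := by
  have hle : multGroup α ≤ Subgroup.centralizer {MLoop.leftTrans a} := by
    rw [multGroup, Subgroup.closure_le]
    rintro f (⟨x, rfl⟩ | ⟨x, rfl⟩) <;>
      · rw [SetLike.mem_coe, Subgroup.mem_centralizer_iff]
        rintro g hg
        rw [Set.mem_singleton_iff] at hg
        subst hg
        ext y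
        simp only [Equiv.Perm.mul_apply, leftTrans_apply', rightTrans_apply']
        first
        | -- left translation case : a*(x*y) = x*(a*y)
          calc a * (x * y) = (a * x) * y := ((ha x y).2.2.2).symm
            _ = (x * a) * y := by rw [(ha x y).1]
            _ = x * (a * y) := (ha x y).2.2.1
        | -- right translation case : a*(y*x) = (a*y)*x
          exact ((ha y x).2.2.2).symm
  have := (Subgroup.mem_centralizer_iff.mp (hle hh)) (MLoop.leftTrans a) rfl
  exact this.symm

lemma leftTrans_mem_center_of_center {a : α} (ha : a ∈ loopCenter α) :
    (⟨MLoop.leftTrans a, leftTrans_mem_multGroup a⟩ : ↥(multGroup α)) ∈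
      Subgroup.center ↥(multGroup α) := by
  rw [Subgroup.mem_center_iff]
  intro g
  exact Subtype.ext (leftTrans_comm_of_center ha g.2)

lemma of_mem_center_multGroup {g : ↥(multGroup α)}
    (hg : g ∈ Subgroup.center ↥(multGroup α)) :
    (g : Equiv.Perm α) 1 ∈ loopCenter α ∧
      (g : Equiv.Perm α) = MLoop.leftTrans ((g : Equiv.Perm α) 1) := by
  rw [Subgroup.mem_center_iff] at hg
  set c : α := (g : Equiv.Perm α) 1 with hc
  have hgL : ∀ x y : α, x * (g : Equiv.Perm α) y = (g : Equiv.Perm α) (x * y) := by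
    intro x y
    have h := hg ⟨MLoop.leftTrans x, leftTrans_mem_multGroup x⟩
    have h2 := congrArg (fun h : ↥(multGroup α) => (h : Equiv.Perm α) y) h
    simpa [Equiv.Perm.mul_apply, leftTrans_apply'] using h2
  have hgR : ∀ x y : α, ((g : Equiv.Perm α) y) * x = (g : Equiv.Perm α) (y * x) := by
    intro x y
    have h := hg ⟨MLoop.rightTrans x, rightTrans_mem_multGroup x⟩
    have h2 := congrArg (fun h : ↥(multGroup α) => (h : Equiv.Perm α) y) h
    simpa [Equiv.Perm.mul_apply, rightTrans_apply'] using h2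
  have hfun : ∀ x : α, (g : Equiv.Perm α) x = c * x := by
    intro x
    have := hgR x 1
    rw [MLoop.one_mul] at this
    exact this.symm
  have hcomm : ∀ u : α, u * c = c * u := by
    intro u
    have := hgL u 1
    rw [MLoop.mul_one, hfun u] at this
    exact this
  have h2' : ∀ u v : α, u * (c * v) = c * (u * v) := by
    intro u v
    have := hgL u v
    rw [hfun v, hfun (u * v)] at this
    exact this
  have h4' : ∀ u v : α, (c * u) * v = c * (u * v) := by
    intro u v
    have := hgR v u
    rw [hfun u, hfun (u * v)] at this
    exact this
  constructor
  · intro u v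
    refine ⟨hcomm u, ?_, ?_, h4' u v⟩
    · calc (u * v) * c = c * (u * v) := hcomm (u * v)
        _ = u * (c * v) := (h2' u v).symm
        _ = u * (v * c) := by rw [hcomm v]
    · calc (u * c) * v = (c * u) * v := by rw [hcomm u]
        _ = c * (u * v) := h4' u v
        _ = u * (c * v) := (h2' u v).symm
  · exact Equiv.ext fun x => hfun x

end Prop1Aux

/-- **Proposition 1.** For a loop `L` with centre `Z(L)` and multiplication group
`𝔐` with centre `Z(𝔐)`: `Z(𝔐) = {L(a) : a ∈ Z(L)}`, the map `a ↦ L(a)` is a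
group isomorphism (multiplicative bijection) of `Z(L)` onto `Z(𝔐)`, and
`Z(L) = {φ(1) : φ ∈ Z(𝔐)}`. -/
theorem center_multGroup_eq_leftTrans_loopCenter (α : Type u) [MLoop α] :
    (Subtype.val '' ((Subgroup.center ↥(multGroup α)) : Set ↥(multGroup α))
        = MLoop.leftTrans '' loopCenter α) ∧
    Set.BijOn MLoop.leftTrans (loopCenter α)
      (Subtype.val '' ((Subgroup.center ↥(multGroup α)) : Set ↥(multGroup α))) ∧
    (∀ a ∈ loopCenter α, ∀ b ∈ loopCenter α,
      MLoop.leftTrans (a * b) = MLoop.leftTrans a * MLoop.leftTrans b) ∧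
    loopCenter α = {x : α | ∃ g ∈ Subgroup.center ↥(multGroup α),
      ((g : Equiv.Perm α)) 1 = x} := by
  have hmul : ∀ a ∈ loopCenter α, ∀ b : α,
      MLoop.leftTrans (a * b) = MLoop.leftTrans a * MLoop.leftTrans b := by
    intro a ha b
    ext y
    simp only [Equiv.Perm.mul_apply, leftTrans_apply']
    exact (ha b y).2.2.2
  have heq : Subtype.val '' ((Subgroup.center ↥(multGroup α)) : Set ↥(multGroup α))
      = MLoop.leftTrans '' loopCenter α := by
    ext f
    constructor
    · rintro ⟨g, hg, rfl⟩
      obtain ⟨h1, h2⟩ := of_mem_center_multGroup hg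
      exact ⟨(g : Equiv.Perm α) 1, h1, h2.symm⟩
    · rintro ⟨a, ha, rfl⟩
      exact ⟨⟨MLoop.leftTrans a, leftTrans_mem_multGroup a⟩,
        leftTrans_mem_center_of_center ha, rfl⟩
  refine ⟨heq, ⟨?_, ?_, ?_⟩, fun a ha b _ => hmul a ha b, ?_⟩
  · -- MapsTo
    intro a ha
    exact ⟨⟨MLoop.leftTrans a, leftTrans_mem_multGroup a⟩,
      leftTrans_mem_center_of_center ha, rfl⟩
  · -- InjOn
    intro a _ b _ h
    have := congrArg (fun f : Equiv.Perm α => f 1) h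
    simpa [leftTrans_apply', MLoop.mul_one] using this
  · -- SurjOn
    intro f hf
    rw [heq] at hf
    exact hf
  · -- last equality
    ext x
    constructor
    · intro hx
      refine ⟨⟨MLoop.leftTrans x, leftTrans_mem_multGroup x⟩,
        leftTrans_mem_center_of_center hx, ?_⟩
      exact MLoop.mul_one x
    · rintro ⟨g, hg, rfl⟩
      exact (of_mem_center_multGroup hg).1
end

section
/- Let L be a commutative Moufang loop with centre Z₁(L) = Z(L) and second centre Z₂(L) (the preimage in L of the centre of the quotient loop L/Z(L)). If Z₂(L) ≠ Z₁(L), then the associator subloop L′ is a proper subloop of L. -/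
/-!  Basic theory of loops, commutative Moufang loops, their multiplication
groups, subloops, Frattini subloops, normality and normalizers. -/

universe u v

namespace CMLAux

open MLoop

variable {α : Type u} [CommMoufangLoop α]

lemma comm (a b : α) : a * b = b * a := CommMoufangLoop.mul_comm a b

lemma cancel_left {a u v : α} (h : a * u = a * v) : u = v := by
  have h2 := congrArg (MLoop.ldiv a) h
  rwa [MLoop.ldiv_mul, MLoop.ldiv_mul] at h2

lemma ldiv_self (a : α) : MLoop.ldiv a a = 1 := by
  have h := MLoop.ldiv_mul a (1 : α)
  rwa [MLoop.mul_one] at h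

/-- `(x·x)·y = x·(x·y)`. -/
lemma sq_mul (x y : α) : (x * x) * y = x * (x * y) := by
  have h := CommMoufangLoop.moufang x y 1
  rw [MLoop.mul_one, MLoop.mul_one] at h
  rw [h, comm (x * y) x]

/-- `(x·u)·(x·v) = x·(x·(u·v))`. -/
lemma moufM (x u v : α) : (x * u) * (x * v) = x * (x * (u * v)) := by
  rw [← CommMoufangLoop.moufang, sq_mul]

/-- `(u·x)·(v·x) = x·(x·(u·v))`. -/
lemma moufR (x u v : α) : (u * x) * (v * x) = x * (x * (u * v)) := by
  rw [comm u x, comm v x, moufM]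

lemma c_comm {c : α} (hc : c ∈ loopCenter α) (a : α) : a * c = c * a := (hc a a).1
lemma c2 {c : α} (hc : c ∈ loopCenter α) (a b : α) : (a * b) * c = a * (b * c) :=
  (hc a b).2.1
lemma c3 {c : α} (hc : c ∈ loopCenter α) (a b : α) : (a * c) * b = a * (c * b) :=
  (hc a b).2.2.1
lemma c4 {c : α} (hc : c ∈ loopCenter α) (a b : α) : (c * a) * b = c * (a * b) :=
  (hc a b).2.2.2

lemma float1 {c : α} (hc : c ∈ loopCenter α) (p q : α) : (p * c) * q = (p * q) * c := by
  rw [c3 hc, ← c_comm hc q, ← c2 hc]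

lemma float2 {c : α} (hc : c ∈ loopCenter α) {d : α} (hd : d ∈ loopCenter α) (p q : α) :
    (p * c) * (q * d) = (p * q) * (c * d) := by
  rw [← c2 hd (p * c) q, float1 hc, c2 hd]

lemma assoc_eq (a b x : α) : (a * (b * x)) * loopAssociator a b x = (a * b) * x :=
  MLoop.mul_ldiv _ _

lemma assoc_eq_one {a b x : α} (h : (a * b) * x = a * (b * x)) :
    loopAssociator a b x = 1 := by
  unfold loopAssociator
  rw [h, ldiv_self]

lemma assoc_ne_one {a b x : α} (h : loopAssociator a b x = 1) : (a * b) * x = a * (b * x) := by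
  have h2 := assoc_eq a b x
  rw [h, MLoop.mul_one] at h2
  exact h2.symm

lemma one_mem_center : (1 : α) ∈ loopCenter α := by
  intro a b
  refine ⟨by rw [MLoop.mul_one, MLoop.one_mul], by rw [MLoop.mul_one, MLoop.mul_one], ?_, ?_⟩
  · rw [MLoop.mul_one, MLoop.one_mul]
  · rw [MLoop.one_mul, MLoop.one_mul]

lemma center_subset_second : loopCenter α ⊆ secondCenter α := by
  intro x hx a b
  refine ⟨?_, ?_, ?_⟩
  · rw [assoc_eq_one (hx a b).2.1]; exact one_mem_center
  · rw [assoc_eq_one (hx a b).2.2.1]; exact one_mem_center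
  · rw [assoc_eq_one (hx a b).2.2.2]; exact one_mem_center

lemma mem_center_of_assoc {x : α} (H : ∀ a b : α, (a * b) * x = a * (b * x)) :
    x ∈ loopCenter α := by
  intro a b
  have c3' : ∀ a b : α, (a * x) * b = a * (x * b) := by
    intro a b
    rw [comm (a * x) b, ← H b a, comm b a, H a b, comm b x]
  refine ⟨comm a x, H a b, c3' a b, ?_⟩
  rw [comm x a, c3' a b, comm x b, ← H a b, comm (a * b) x]

/-- Key multiplicativity: if all associators with `x` are central, the map
`a ↦ (a,b,x)` is multiplicative. -/
lemma f_mul {x : α} (hx : x ∈ secondCenter α) (a₁ a₂ b : α) :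
    loopAssociator (a₁ * a₂) b x = loopAssociator a₁ b x * loopAssociator a₂ b x := by
  set c₁ := loopAssociator a₁ b x with hc₁def
  set c₂ := loopAssociator a₂ b x with hc₂def
  set t := a₁ * a₂ with htdef
  set c := loopAssociator t b x with hcdef
  have hc₁ : c₁ ∈ loopCenter α := (hx a₁ b).1
  have hc₂ : c₂ ∈ loopCenter α := (hx a₂ b).1
  have hc : c ∈ loopCenter α := (hx t b).1
  -- way 1
  have way1 : ((a₁ * b) * x) * ((a₂ * b) * x) = x * (x * ((b * b) * t)) := by
    rw [moufR, comm a₁ b, comm a₂ b, ← CommMoufangLoop.moufang, ← htdef]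
  -- way 2
  have way2 : ((a₁ * b) * x) * ((a₂ * b) * x)
      = ((b * x) * ((b * x) * t)) * (c₁ * c₂) := by
    rw [← assoc_eq a₁ b x, ← assoc_eq a₂ b x, ← hc₁def, ← hc₂def,
      float2 hc₁ hc₂, comm a₁ (b * x), comm a₂ (b * x), moufM, ← htdef]
  -- the c-equation
  have wayc : ((b * x) * ((b * x) * t)) * c = x * (x * ((b * b) * t)) := by
    rw [c2 hc, comm (b * x) t, hcdef, assoc_eq t b x, moufR, comm t b, ← sq_mul b t]
  have key : ((b * x) * ((b * x) * t)) * c = ((b * x) * ((b * x) * t)) * (c₁ * c₂) := by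
    rw [wayc, ← way1, way2]
  exact cancel_left key

lemma f_one {x : α} (b : α) : loopAssociator (1 : α) b x = 1 := by
  apply assoc_eq_one
  rw [MLoop.one_mul, MLoop.one_mul]

/-- Associators vanish under the map `a ↦ (a,b,x)` when `x ∈ Z₂`. -/
lemma f_gen {x : α} (hx : x ∈ secondCenter α) (b u v w : α) :
    loopAssociator (loopAssociator u v w) b x = 1 := by
  set t := loopAssociator u v w with htdef
  have key : (u * (v * w)) * t = (u * v) * w := assoc_eq u v w
  have h2 := congrArg (fun z => loopAssociator z b x) key
  beta_reduce at h2
  rw [f_mul hx, f_mul hx, f_mul hx, f_mul hx, f_mul hx] at h2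
  set fu := loopAssociator u b x
  set fv := loopAssociator v b x
  set fw := loopAssociator w b x
  have hfu : fu ∈ loopCenter α := (hx u b).1
  rw [← c4 hfu fv fw] at h2
  -- h2 : ((fu*fv)*fw) * (assoc t b x) = (fu*fv)*fw
  have h3 : ((fu * fv) * fw) * loopAssociator t b x = ((fu * fv) * fw) * 1 := by
    rw [MLoop.mul_one, h2]
  exact cancel_left h3

lemma vanish {x : α} (hx : x ∈ secondCenter α) {y : α}
    (hy : Subloop.InClosure {z : α | ∃ a b c : α, z = loopAssociator a b c} y) :
    ∀ b : α, loopAssociator y b x = 1 := by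
  induction hy with
  | of hz =>
      obtain ⟨u, v, w, rfl⟩ := hz
      exact fun b => f_gen hx b u v w
  | one => exact fun b => f_one b
  | mul _ _ ih1 ih2 =>
      intro b
      rw [f_mul hx, ih1 b, ih2 b, MLoop.mul_one]
  | ldiv _ _ ih1 ih2 =>
      intro b
      rename_i p q _ _
      have h := f_mul hx p (MLoop.ldiv p q) b
      rw [MLoop.mul_ldiv, ih1 b, ih2 b, MLoop.one_mul] at h
      exact h.symm
  | rdiv _ _ ih1 ih2 =>
      intro b
      rename_i p q _ _
      have h := f_mul hx (MLoop.rdiv p q) q b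
      rw [MLoop.rdiv_mul, ih1 b, ih2 b, MLoop.mul_one] at h
      exact h.symm

end CMLAux

/-- **Lemma 3.** If `Z₂(L) ≠ Z₁(L)` for a commutative Moufang loop `L`, then the
loopAssociator subloop `L′` is a proper subloop of `L`. -/
theorem assocSubloop_ne_top_of_secondCenter_ne_center (α : Type u) [CommMoufangLoop α]
    (h : secondCenter α ≠ loopCenter α) :
    (assocSubloop α : Set α) ≠ Set.univ := by
  intro hcontra
  have hsub : loopCenter α ⊆ secondCenter α := CMLAux.center_subset_second
  have hns : ¬ secondCenter α ⊆ loopCenter α := fun hs => h (Set.Subset.antisymm hs hsub)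
  obtain ⟨x, hx2, hxn⟩ := Set.not_subset.mp hns
  have hab : ∃ a b : α, loopAssociator a b x ≠ 1 := by
    by_contra hno
    push_neg at hno
    exact hxn (CMLAux.mem_center_of_assoc (fun a b => CMLAux.assoc_ne_one (hno a b)))
  obtain ⟨a, b, hne⟩ := hab
  have ha : a ∈ (assocSubloop α : Set α) := by rw [hcontra]; trivial
  exact hne (CMLAux.vanish hx2 ha b)
end

section
/- Let θ be a homomorphism of a loop L onto a loop K and suppose 𝔉(L) = L. Then 𝔉(K) = K. -/
/-!  Basic theory of loops, commutative Moufang loops, their multiplication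
groups, subloops, Frattini subloops, normality and normalizers. -/

universe u v

/-- Closure of a set closed under all operations is itself. -/
theorem inClosure_self {α : Type u} [MLoop α] {T : Set α}
    (h1 : (1 : α) ∈ T)
    (hm : ∀ {a b : α}, a ∈ T → b ∈ T → a * b ∈ T)
    (hl : ∀ {a b : α}, a ∈ T → b ∈ T → MLoop.ldiv a b ∈ T)
    (hr : ∀ {a b : α}, a ∈ T → b ∈ T → MLoop.rdiv a b ∈ T)
    {x : α} (hx : Subloop.InClosure T x) : x ∈ T := by
  induction hx with
  | of h => exact h
  | one => exact h1
  | mul _ _ ha hb => exact hm ha hb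
  | ldiv _ _ ha hb => exact hl ha hb
  | rdiv _ _ ha hb => exact hr ha hb

/-- **Lemma 5.** If `θ` is a homomorphism of a loop `L` onto a loop `K` and
`𝔉(L) = L`, then `𝔉(K) = K`. -/
theorem frattiniSubloop_eq_top_of_surjective {α : Type u} {β : Type v}
    [MLoop α] [MLoop β] (θ : α → β) (hsurj : Function.Surjective θ)
    (hmul : ∀ a b : α, θ (a * b) = θ a * θ b)
    (h : frattiniSubloop α = Set.univ) :
    frattiniSubloop β = Set.univ := by
  -- basic facts about θ
  have hone : θ 1 = 1 := by
    have h1 : θ (1 : α) = θ 1 * θ 1 := by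
      have := hmul 1 1; rwa [MLoop.mul_one] at this
    have h2 : MLoop.ldiv (θ (1:α)) (θ 1 * θ 1) = θ 1 := MLoop.ldiv_mul _ _
    rw [← h1] at h2
    have h3 : MLoop.ldiv (θ (1:α)) (θ 1 * 1) = 1 := MLoop.ldiv_mul _ _
    rw [MLoop.mul_one] at h3
    rw [h3] at h2; exact h2.symm
  have hldiv : ∀ a b : α, θ (MLoop.ldiv a b) = MLoop.ldiv (θ a) (θ b) := by
    intro a b
    have h1 : θ (a * MLoop.ldiv a b) = θ a * θ (MLoop.ldiv a b) := hmul _ _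
    rw [MLoop.mul_ldiv] at h1
    calc θ (MLoop.ldiv a b)
        = MLoop.ldiv (θ a) (θ a * θ (MLoop.ldiv a b)) := (MLoop.ldiv_mul _ _).symm
      _ = MLoop.ldiv (θ a) (θ b) := by rw [← h1]
  have hrdiv : ∀ a b : α, θ (MLoop.rdiv a b) = MLoop.rdiv (θ a) (θ b) := by
    intro a b
    have h1 : θ (MLoop.rdiv a b * b) = θ (MLoop.rdiv a b) * θ b := hmul _ _
    rw [MLoop.rdiv_mul] at h1
    calc θ (MLoop.rdiv a b)
        = MLoop.rdiv (θ (MLoop.rdiv a b) * θ b) (θ b) := (MLoop.mul_rdiv _ _).symm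
      _ = MLoop.rdiv (θ a) (θ b) := by rw [← h1]
  ext b
  simp only [Set.mem_univ, iff_true]
  intro S hS
  obtain ⟨a, ha⟩ := hsurj b
  set T : Set α := θ ⁻¹' (Subloop.closure S : Set β) with hT
  -- T is closed under operations
  have hT1 : (1 : α) ∈ T := by
    show Subloop.InClosure S (θ 1); rw [hone]; exact Subloop.InClosure.one
  have hTm : ∀ {x y : α}, x ∈ T → y ∈ T → x * y ∈ T := by
    intro x y hx hy
    show Subloop.InClosure S (θ (x * y)); rw [hmul]
    exact Subloop.InClosure.mul hx hy
  have hTl : ∀ {x y : α}, x ∈ T → y ∈ T → MLoop.ldiv x y ∈ T := by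
    intro x y hx hy
    show Subloop.InClosure S (θ (MLoop.ldiv x y)); rw [hldiv]
    exact Subloop.InClosure.ldiv hx hy
  have hTr : ∀ {x y : α}, x ∈ T → y ∈ T → MLoop.rdiv x y ∈ T := by
    intro x y hx hy
    show Subloop.InClosure S (θ (MLoop.rdiv x y)); rw [hrdiv]
    exact Subloop.InClosure.rdiv hx hy
  -- closure (insert a T) = univ
  have key : ∀ y : β, Subloop.InClosure (insert b S) y →
      ∀ x : α, θ x = y → Subloop.InClosure (insert a T) x := by
    intro y hy
    induction hy with
    | @of y hyS =>
      intro x hx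
      rcases hyS with rfl | hyS
      · -- θ x = b = θ a, so x = a * ldiv a x with ldiv a x ∈ T
        have hz : MLoop.ldiv a x ∈ T := by
          show Subloop.InClosure S (θ (MLoop.ldiv a x))
          rw [hldiv, ha, hx]
          have hb1 : ∀ c : β, MLoop.ldiv c c = 1 := fun c => by
            have := MLoop.ldiv_mul c (1 : β); rwa [MLoop.mul_one] at this
          rw [hb1]; exact Subloop.InClosure.one
        have : x = a * MLoop.ldiv a x := (MLoop.mul_ldiv a x).symm
        rw [this]
        exact Subloop.InClosure.mul (Subloop.InClosure.of (Set.mem_insert a T))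
          (Subloop.InClosure.of (Set.mem_insert_of_mem a hz))
      · exact Subloop.InClosure.of (Set.mem_insert_of_mem a
          (show Subloop.InClosure S (θ x) from hx ▸ Subloop.InClosure.of hyS))
    | one =>
      intro x hx
      exact Subloop.InClosure.of (Set.mem_insert_of_mem a
        (show Subloop.InClosure S (θ x) from hx ▸ Subloop.InClosure.one))
    | @mul y1 y2 _ _ ih1 ih2 =>
      intro x hx
      obtain ⟨x1, hx1⟩ := hsurj y1
      have hx2 : θ (MLoop.ldiv x1 x) = y2 := by
        rw [hldiv, hx1, hx]; exact MLoop.ldiv_mul y1 y2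
      have : x = x1 * MLoop.ldiv x1 x := (MLoop.mul_ldiv x1 x).symm
      rw [this]
      exact Subloop.InClosure.mul (ih1 x1 hx1) (ih2 _ hx2)
    | @ldiv y1 y2 _ _ ih1 ih2 =>
      intro x hx
      obtain ⟨x1, hx1⟩ := hsurj y1
      have hx2 : θ (x1 * x) = y2 := by
        rw [hmul, hx1, hx]; exact MLoop.mul_ldiv y1 y2
      have : x = MLoop.ldiv x1 (x1 * x) := (MLoop.ldiv_mul x1 x).symm
      rw [this]
      exact Subloop.InClosure.ldiv (ih1 x1 hx1) (ih2 _ hx2)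
    | @rdiv y1 y2 _ _ ih1 ih2 =>
      intro x hx
      obtain ⟨x2, hx2⟩ := hsurj y2
      have hx1 : θ (x * x2) = y1 := by
        rw [hmul, hx2, hx]; exact MLoop.rdiv_mul y2 y1
      have : x = MLoop.rdiv (x * x2) x2 := (MLoop.mul_rdiv x2 x).symm
      rw [this]
      exact Subloop.InClosure.rdiv (ih1 _ hx1) (ih2 x2 hx2)
  have hins : (Subloop.closure (insert a T) : Set α) = Set.univ := by
    ext x
    simp only [Set.mem_univ, iff_true]
    have hx : θ x ∈ (Subloop.closure (insert b S) : Set β) := by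
      rw [hS]; trivial
    exact key _ hx x rfl
  -- a is a non-generator of α
  have hafr : a ∈ frattiniSubloop α := h ▸ Set.mem_univ a
  have hclT : (Subloop.closure T : Set α) = Set.univ := hafr T hins
  -- hence T = univ, hence closure S = univ
  ext y
  simp only [Set.mem_univ, iff_true]
  obtain ⟨x, hx⟩ := hsurj y
  have hxT : x ∈ T := by
    have hxc : x ∈ (Subloop.closure T : Set α) := by rw [hclT]; trivial
    exact inClosure_self hT1 hTm hTl hTr hxc
  exact hx ▸ hxT
end

section
/- A commutative Moufang loop L satisfies the normalizer condition if and only if through every subloop H of L there passes an ascending subnormal system of L. -/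
/-!  Basic theory of loops, commutative Moufang loops, their multiplication
groups, subloops, Frattini subloops, normality and normalizers. -/

universe u v

/-- `A♯`: the intersection of all members of `Sys` properly containing `A`. -/
def sharpSet {α : Type u} [MLoop α] (Sys : Set (Subloop α)) (A : Subloop α) : Set α :=
  ⋂ B ∈ {B ∈ Sys | A < B}, (B : Set α)

/-- An ascending subnormal system of a commutative Moufang loop: a collection of
subloops containing `{1}` and `L`, linearly ordered by inclusion, closed under
arbitrary unions and intersections, with each `A ≠ L` normal in `A♯` and `A♯ ≠ A`. -/
structure IsAscendingSubnormalSystem {α : Type u} [CommMoufangLoop α]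
    (Sys : Set (Subloop α)) : Prop where
  bot_mem : ⊥ ∈ Sys
  top_mem : ⊤ ∈ Sys
  chain : ∀ A ∈ Sys, ∀ B ∈ Sys, A ≤ B ∨ B ≤ A
  unions : ∀ T ⊆ Sys, T.Nonempty → ∃ A ∈ Sys, (A : Set α) = ⋃ B ∈ T, (B : Set α)
  inters : ∀ T ⊆ Sys, T.Nonempty → ∃ A ∈ Sys, (A : Set α) = ⋂ B ∈ T, (B : Set α)
  normal : ∀ A ∈ Sys, A ≠ ⊤ → ∃ C ∈ Sys, (C : Set α) = sharpSet Sys A ∧ A.IsNormalIn C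
  ascending : ∀ A ∈ Sys, A ≠ ⊤ → sharpSet Sys A ≠ (A : Set α)

section NormalizerProof

open MLoop Ordinal

variable {α : Type u} [CommMoufangLoop α]

theorem Subloop.coe_bot' : ((⊥ : Subloop α) : Set α) = {1} := rfl

theorem Subloop.bot_le' (H : Subloop α) : (⊥ : Subloop α) ≤ H := by
  intro x hx
  have : x = 1 := hx
  subst this
  exact H.one_mem'

/-- `⊥ = {1}` is normal in every subloop of a CML. -/
theorem Subloop.bot_isNormalIn (K : Subloop α) : (⊥ : Subloop α).IsNormalIn K := by
  refine ⟨Subloop.bot_le' K, fun x _ y _ => ?_⟩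
  have h1 : ∀ z : α, lcoset z (((⊥ : Subloop α)) : Set α) = {z} := by
    intro z
    rw [Subloop.coe_bot']
    show (fun w => z * w) '' {1} = {z}
    rw [Set.image_singleton, MLoop.mul_one]
  rw [h1, h1]
  show (fun w => x * w) '' {y} = {x * y}
  rw [Set.image_singleton]

theorem Subloop.closure_iUnion_directed {ι : Sort v} [Nonempty ι] (f : ι → Subloop α)
    (hdir : ∀ i j, ∃ k, f i ≤ f k ∧ f j ≤ f k) :
    (Subloop.closure (⋃ i, (f i : Set α)) : Set α) = ⋃ i, (f i : Set α) := by
  have main : ∀ y : α, Subloop.InClosure (⋃ i, (f i : Set α)) y →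
      y ∈ ⋃ i, (f i : Set α) := by
    intro y hy
    induction hy with
    | of h' => exact h'
    | one => exact Set.mem_iUnion.2 ⟨Classical.arbitrary ι, (f _).one_mem'⟩
    | mul _ _ ha hb =>
        obtain ⟨i, hi⟩ := Set.mem_iUnion.1 ha
        obtain ⟨j, hj⟩ := Set.mem_iUnion.1 hb
        obtain ⟨k, hik, hjk⟩ := hdir i j
        exact Set.mem_iUnion.2 ⟨k, (f k).mul_mem' (hik hi) (hjk hj)⟩
    | ldiv _ _ ha hb =>
        obtain ⟨i, hi⟩ := Set.mem_iUnion.1 ha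
        obtain ⟨j, hj⟩ := Set.mem_iUnion.1 hb
        obtain ⟨k, hik, hjk⟩ := hdir i j
        exact Set.mem_iUnion.2 ⟨k, (f k).ldiv_mem' (hik hi) (hjk hj)⟩
    | rdiv _ _ ha hb =>
        obtain ⟨i, hi⟩ := Set.mem_iUnion.1 ha
        obtain ⟨j, hj⟩ := Set.mem_iUnion.1 hb
        obtain ⟨k, hik, hjk⟩ := hdir i j
        exact Set.mem_iUnion.2 ⟨k, (f k).rdiv_mem' (hik hi) (hjk hj)⟩
  exact Set.Subset.antisymm (fun x hx => main x hx) (fun x hx => Subloop.InClosure.of hx)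

open Classical in
/-- The chosen strict normal extension of a proper subloop. -/
noncomputable def nextS (hnc : LoopNormalizerCondition α) (A : Subloop α) : Subloop α :=
  if h : A = ⊤ then ⊤ else (hnc A h).choose

theorem lt_nextS (hnc : LoopNormalizerCondition α) {A : Subloop α} (h : A ≠ ⊤) :
    A < nextS hnc A := by
  rw [nextS, dif_neg h]; exact (hnc A h).choose_spec.1

theorem isNormalIn_nextS (hnc : LoopNormalizerCondition α) {A : Subloop α} (h : A ≠ ⊤) :
    A.IsNormalIn (nextS hnc A) := by
  rw [nextS, dif_neg h]; exact (hnc A h).choose_spec.2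

theorem le_nextS (hnc : LoopNormalizerCondition α) (A : Subloop α) : A ≤ nextS hnc A := by
  by_cases h : A = ⊤
  · subst h; rw [nextS, dif_pos rfl]
  · exact le_of_lt (lt_nextS hnc h)

/-- The transfinite normalizer tower over `H`. -/
noncomputable def towerS (hnc : LoopNormalizerCondition α) (H : Subloop α) :
    Ordinal.{u} → Subloop α := fun o =>
  Ordinal.limitRecOn o H (fun _ A => nextS hnc A)
    (fun o _ ih => Subloop.closure (⋃ p : {β : Ordinal.{u} // β < o}, (ih p.1 p.2 : Set α)))

theorem towerS_zero (hnc : LoopNormalizerCondition α) (H : Subloop α) :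
    towerS hnc H 0 = H :=
  Ordinal.limitRecOn_zero _ _ _

theorem towerS_succ (hnc : LoopNormalizerCondition α) (H : Subloop α) (o : Ordinal.{u}) :
    towerS hnc H (Order.succ o) = nextS hnc (towerS hnc H o) :=
  Ordinal.limitRecOn_succ _ _ _ _

theorem towerS_limit (hnc : LoopNormalizerCondition α) (H : Subloop α) {o : Ordinal.{u}}
    (h : Order.IsSuccLimit o) :
    towerS hnc H o =
      Subloop.closure (⋃ p : {β : Ordinal.{u} // β < o}, (towerS hnc H p.1 : Set α)) :=
  Ordinal.limitRecOn_limit _ _ _ _ h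

theorem towerS_mono (hnc : LoopNormalizerCondition α) (H : Subloop α) :
    Monotone (towerS hnc H) := by
  have key : ∀ γ : Ordinal.{u}, ∀ β < γ, towerS hnc H β ≤ towerS hnc H γ := by
    intro γ
    induction γ using Ordinal.induction with
    | _ γ IH =>
      rcases Ordinal.zero_or_succ_or_isSuccLimit γ with h0 | ⟨δ, rfl⟩ | hlim
      · subst h0; intro β hβ; exact absurd hβ (show ¬ β < 0 by simp)
      · intro β hβ
        rcases lt_or_eq_of_le ((Order.lt_succ_iff).1 hβ) with h | rfl
        · refine le_trans (IH δ (Order.lt_succ δ) β h) ?_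
          rw [towerS_succ]; exact le_nextS hnc _
        · rw [towerS_succ]; exact le_nextS hnc _
      · intro β hβ
        rw [towerS_limit hnc H hlim]
        intro x hx
        exact Subloop.InClosure.of (Set.mem_iUnion.2 ⟨⟨β, hβ⟩, hx⟩)
  intro a b hab
  rcases lt_or_eq_of_le hab with h | rfl
  · exact key b a h
  · exact le_rfl

theorem towerS_limit_carrier (hnc : LoopNormalizerCondition α) (H : Subloop α)
    {o : Ordinal.{u}} (h : Order.IsSuccLimit o) :
    (towerS hnc H o : Set α) = ⋃ p : {β : Ordinal.{u} // β < o}, (towerS hnc H p.1 : Set α) := by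
  rw [towerS_limit hnc H h]
  haveI : Nonempty {β : Ordinal.{u} // β < o} := ⟨⟨0, h.pos⟩⟩
  apply Subloop.closure_iUnion_directed
  intro i j
  rcases le_total i.1 j.1 with hij | hij
  · exact ⟨j, towerS_mono hnc H hij, le_rfl⟩
  · exact ⟨i, le_rfl, towerS_mono hnc H hij⟩

theorem exists_towerS_top (hnc : LoopNormalizerCondition α) (H : Subloop α) :
    ∃ β : Ordinal.{u}, towerS hnc H β = ⊤ := by
  by_contra hcon
  push_neg at hcon
  have hstrict : StrictMono (towerS hnc H) := by
    intro a b hab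
    calc towerS hnc H a < towerS hnc H (Order.succ a) := by
          rw [towerS_succ]; exact lt_nextS hnc (hcon a)
      _ ≤ towerS hnc H b := towerS_mono hnc H (Order.succ_le_of_lt hab)
  exact not_injective_of_ordinal _ hstrict.injective

theorem mem_sharpSet_iff (Sys : Set (Subloop α)) (A : Subloop α) (x : α) :
    x ∈ sharpSet Sys A ↔ ∀ B ∈ Sys, A < B → x ∈ B := by
  rw [sharpSet]
  constructor
  · intro hx B hB hAB
    exact Set.mem_iInter₂.1 hx B ⟨hB, hAB⟩
  · intro hx
    apply Set.mem_iInter₂.2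
    rintro B ⟨hB, hAB⟩
    exact hx B hB hAB

/-- The forward (hard) direction: the normalizer tower over `H`, together with
`⊥`, is an ascending subnormal system through `H`. -/
theorem forward_direction (hnc : LoopNormalizerCondition α) (H : Subloop α) :
    ∃ Sys : Set (Subloop α), IsAscendingSubnormalSystem Sys ∧ H ∈ Sys := by
  refine ⟨insert (⊥ : Subloop α) (Set.range (towerS hnc H)), ?_, ?_⟩
  case refine_2 => exact Set.mem_insert_iff.2 (Or.inr ⟨0, towerS_zero hnc H⟩)
  have hmono : Monotone (towerS hnc H) := towerS_mono hnc H
  set g : Ordinal.{u} → Subloop α := towerS hnc H with hgdef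
  set Sys : Set (Subloop α) := insert (⊥ : Subloop α) (Set.range g) with hSys
  have hmem_iff : ∀ {B : Subloop α}, B ∈ Sys ↔ (B = ⊥ ∨ ∃ γ : Ordinal.{u}, g γ = B) := by
    intro B
    rw [hSys, Set.mem_insert_iff]
    exact Iff.rfl
  have hbot : (⊥ : Subloop α) ∈ Sys := hmem_iff.2 (Or.inl rfl)
  have htop : (⊤ : Subloop α) ∈ Sys := by
    obtain ⟨β, hβ⟩ := exists_towerS_top hnc H
    exact hmem_iff.2 (Or.inr ⟨β, hβ⟩)
  -- sharp computation for members of the range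
  have sharp_range : ∀ A : Subloop α, (∃ γ : Ordinal.{u}, g γ = A) → A ≠ ⊤ →
      ∃ C ∈ Sys, (C : Set α) = sharpSet Sys A ∧ A.IsNormalIn C ∧ A < C := by
    intro A hA hAtop
    have hne : {β : Ordinal.{u} | g β = A}.Nonempty := hA
    have hgβA : g (sInf {β : Ordinal.{u} | g β = A}) = A := csInf_mem hne
    set βA := sInf {β : Ordinal.{u} | g β = A} with hβA
    have hCnext : g (Order.succ βA) = nextS hnc A := by
      rw [hgdef, towerS_succ, ← hgdef, hgβA]
    have hAC : A < g (Order.succ βA) := by rw [hCnext]; exact lt_nextS hnc hAtop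
    have hCmem : g (Order.succ βA) ∈ Sys := hmem_iff.2 (Or.inr ⟨Order.succ βA, rfl⟩)
    refine ⟨g (Order.succ βA), hCmem, ?_, ?_, hAC⟩
    · apply Set.Subset.antisymm
      · intro x hx
        apply (mem_sharpSet_iff Sys A x).2
        intro B hB hAB
        rcases hmem_iff.1 hB with rfl | ⟨γ, rfl⟩
        · exact absurd hAB (not_lt_of_ge (Subloop.bot_le' A))
        · have hβγ : βA < γ := by
            by_contra hle
            push_neg at hle
            exact absurd (hmono hle) (not_le_of_gt (hgβA ▸ hAB))
          exact hmono (Order.succ_le_of_lt hβγ) hx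
      · intro x hx
        exact (mem_sharpSet_iff Sys A x).1 hx _ hCmem hAC
    · rw [hCnext]; exact isNormalIn_nextS hnc hAtop
  -- sharp computation when ⊥ is not in the range
  have sharp_bot : (⊥ : Subloop α) ∉ Set.range g →
      sharpSet Sys (⊥ : Subloop α) = (g 0 : Set α) := by
    intro hbr
    have hg0 : (⊥ : Subloop α) < g 0 :=
      lt_of_le_of_ne (Subloop.bot_le' _) (fun h => hbr ⟨0, h.symm⟩)
    apply Set.Subset.antisymm
    · intro x hx
      exact (mem_sharpSet_iff Sys ⊥ x).1 hx (g 0) (hmem_iff.2 (Or.inr ⟨0, rfl⟩)) hg0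
    · intro x hx
      apply (mem_sharpSet_iff Sys ⊥ x).2
      intro B hB hBlt
      rcases hmem_iff.1 hB with rfl | ⟨γ, rfl⟩
      · exact absurd hBlt (lt_irrefl _)
      · exact hmono (show (0 : Ordinal.{u}) ≤ γ by simp) hx
  refine ⟨hbot, htop, ?_, ?_, ?_, ?_, ?_⟩
  · -- chain
    intro A hA B hB
    rcases hmem_iff.1 hA with rfl | ⟨β, rfl⟩
    · exact Or.inl (Subloop.bot_le' B)
    rcases hmem_iff.1 hB with rfl | ⟨γ, rfl⟩
    · exact Or.inr (Subloop.bot_le' _)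
    rcases le_total β γ with h | h
    · exact Or.inl (hmono h)
    · exact Or.inr (hmono h)
  · -- unions
    intro T hT hTne
    by_cases hT' : ∃ B ∈ T, B ≠ (⊥ : Subloop α)
    · set T' : Set (Subloop α) := {B ∈ T | B ≠ ⊥} with hT'def
      have hT'ne : T'.Nonempty := by
        obtain ⟨B, hB1, hB2⟩ := hT'
        exact ⟨B, hB1, hB2⟩
      haveI : Nonempty ↥T' := hT'ne.to_subtype
      have hrange : ∀ B : ↥T', {β : Ordinal.{u} | g β = B.1}.Nonempty := by
        rintro ⟨B, hBT, hBbot⟩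
        rcases hmem_iff.1 (hT hBT) with rfl | hB
        · exact absurd rfl hBbot
        · exact hB
      set h : ↥T' → Ordinal.{u} := fun B => sInf {β : Ordinal.{u} | g β = B.1} with hhdef
      have hgh' : ∀ (B : Subloop α) (hB : B ∈ T'), g (h ⟨B, hB⟩) = B :=
        fun B hB => csInf_mem (hrange ⟨B, hB⟩)
      have hbdd : BddAbove (Set.range h) := Ordinal.bddAbove_range.{u, u} h
      set s := sSup (Set.range h) with hsdef
      have hle : ∀ B : ↥T', h B ≤ s := fun B => le_csSup hbdd ⟨B, rfl⟩
      have hTT' : (⋃ B ∈ T, (B : Set α)) = ⋃ B ∈ T', (B : Set α) := by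
        apply Set.Subset.antisymm
        · intro x hx
          obtain ⟨B, hB, hxB⟩ := Set.mem_iUnion₂.1 hx
          by_cases hBbot : B = (⊥ : Subloop α)
          · subst hBbot
            have : x = 1 := hxB
            subst this
            obtain ⟨B₀, hB₀⟩ := hT'ne
            exact Set.mem_iUnion₂.2 ⟨B₀, hB₀, B₀.one_mem'⟩
          · exact Set.mem_iUnion₂.2 ⟨B, ⟨hB, hBbot⟩, hxB⟩
        · intro x hx
          obtain ⟨B, hB, hxB⟩ := Set.mem_iUnion₂.1 hx
          exact Set.mem_iUnion₂.2 ⟨B, hB.1, hxB⟩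
      refine ⟨g s, hmem_iff.2 (Or.inr ⟨s, rfl⟩), ?_⟩
      rw [hTT']
      by_cases hmem : s ∈ Set.range h
      · obtain ⟨⟨B₀, hB₀T⟩, hB₀⟩ := hmem
        apply Set.Subset.antisymm
        · intro x hx
          refine Set.mem_iUnion₂.2 ⟨B₀, hB₀T, ?_⟩
          rw [← hgh' B₀ hB₀T, hB₀]
          exact hx
        · intro x hx
          obtain ⟨B, hB, hxB⟩ := Set.mem_iUnion₂.1 hx
          have hBle : B ≤ g s := by
            rw [← hgh' B hB]
            exact hmono (hle ⟨B, hB⟩)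
          exact hBle hxB
      · have hslim : Order.IsSuccLimit s := by
          rw [Ordinal.isSuccLimit_iff, Order.isSuccPrelimit_iff_succ_lt]
          constructor
          · intro h0
            obtain ⟨B₀, hB₀⟩ := hT'ne
            have h1 : h ⟨B₀, hB₀⟩ ≤ s := hle _
            rw [h0] at h1
            have h2 : h ⟨B₀, hB₀⟩ = 0 := le_antisymm h1 (by simp)
            exact hmem ⟨⟨B₀, hB₀⟩, by rw [h2, h0]⟩
          · intro a ha
            have hex : ∃ B : ↥T', a < h B := by
              by_contra hcon
              push_neg at hcon
              have : s ≤ a := csSup_le (Set.range_nonempty h)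
                (by rintro _ ⟨B, rfl⟩; exact hcon B)
              exact absurd ha (not_lt_of_ge this)
            obtain ⟨B, hB⟩ := hex
            have h1 : Order.succ a ≤ h B := Order.succ_le_of_lt hB
            rcases lt_or_eq_of_le (h1.trans (hle B)) with h2 | h2
            · exact h2
            · exact absurd ⟨B, le_antisymm (hle B) (h2 ▸ h1)⟩ hmem
        rw [hgdef, towerS_limit_carrier hnc H hslim, ← hgdef]
        apply Set.Subset.antisymm
        · intro x hx
          obtain ⟨⟨β, hβ⟩, hxβ⟩ := Set.mem_iUnion.1 hx
          have hex : ∃ B : ↥T', β ≤ h B := by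
            by_contra hcon
            push_neg at hcon
            have : s ≤ β := csSup_le (Set.range_nonempty h)
              (by rintro _ ⟨B, rfl⟩; exact le_of_lt (hcon B))
            exact absurd hβ (not_lt_of_ge this)
          obtain ⟨⟨B, hBT⟩, hB⟩ := hex
          refine Set.mem_iUnion₂.2 ⟨B, hBT, ?_⟩
          rw [← hgh' B hBT]
          exact hmono hB hxβ
        · intro x hx
          obtain ⟨B, hB, hxB⟩ := Set.mem_iUnion₂.1 hx
          have hlt : h ⟨B, hB⟩ < s := by
            rcases lt_or_eq_of_le (hle ⟨B, hB⟩) with h1 | h1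
            · exact h1
            · exact absurd ⟨⟨B, hB⟩, h1⟩ hmem
          refine Set.mem_iUnion.2 ⟨⟨h ⟨B, hB⟩, hlt⟩, ?_⟩
          rw [hgh' B hB]
          exact hxB
    · push_neg at hT'
      refine ⟨⊥, hbot, ?_⟩
      apply Set.Subset.antisymm
      · intro x hx
        have : x = 1 := hx
        subst this
        obtain ⟨B, hB⟩ := hTne
        exact Set.mem_iUnion₂.2 ⟨B, hB, B.one_mem'⟩
      · intro x hx
        obtain ⟨B, hB, hxB⟩ := Set.mem_iUnion₂.1 hx
        rw [hT' B hB] at hxB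
        exact hxB
  · -- inters
    intro T hT hTne
    by_cases hbotT : (⊥ : Subloop α) ∈ T
    · refine ⟨⊥, hbot, ?_⟩
      apply Set.Subset.antisymm
      · intro x hx
        have : x = 1 := hx
        subst this
        exact Set.mem_iInter₂.2 fun B _ => B.one_mem'
      · intro x hx
        exact Set.mem_iInter₂.1 hx ⊥ hbotT
    · have hI : {β : Ordinal.{u} | g β ∈ T}.Nonempty := by
        obtain ⟨B, hB⟩ := hTne
        rcases hmem_iff.1 (hT hB) with rfl | ⟨β, rfl⟩
        · exact absurd hB hbotT
        · exact ⟨β, hB⟩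
      have hmem₀ : g (sInf {β : Ordinal.{u} | g β ∈ T}) ∈ T := csInf_mem hI
      refine ⟨g (sInf {β : Ordinal.{u} | g β ∈ T}), hmem_iff.2 (Or.inr ⟨_, rfl⟩), ?_⟩
      apply Set.Subset.antisymm
      · intro x hx
        apply Set.mem_iInter₂.2
        intro B hB
        rcases hmem_iff.1 (hT hB) with rfl | ⟨γ, rfl⟩
        · exact absurd hB hbotT
        · exact hmono (csInf_le' hB) hx
      · intro x hx
        exact Set.mem_iInter₂.1 hx _ hmem₀
  · -- normal
    intro A hA hAtop
    rcases hmem_iff.1 hA with rfl | hA'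
    · by_cases hbr : (⊥ : Subloop α) ∈ Set.range g
      · obtain ⟨C, hC1, hC2, hC3, _⟩ := sharp_range ⊥ hbr hAtop
        exact ⟨C, hC1, hC2, hC3⟩
      · exact ⟨g 0, hmem_iff.2 (Or.inr ⟨0, rfl⟩), (sharp_bot hbr).symm,
          Subloop.bot_isNormalIn _⟩
    · obtain ⟨C, hC1, hC2, hC3, _⟩ := sharp_range _ hA' hAtop
      exact ⟨C, hC1, hC2, hC3⟩
  · -- ascending
    intro A hA hAtop
    rcases hmem_iff.1 hA with rfl | hA'
    · by_cases hbr : (⊥ : Subloop α) ∈ Set.range g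
      · obtain ⟨C, _, hC2, _, hC4⟩ := sharp_range ⊥ hbr hAtop
        rw [← hC2]
        intro h
        exact absurd (SetLike.coe_injective h) (ne_of_gt hC4)
      · rw [sharp_bot hbr]
        intro h
        exact hbr ⟨0, SetLike.coe_injective h⟩
    · obtain ⟨C, _, hC2, _, hC4⟩ := sharp_range _ hA' hAtop
      rw [← hC2]
      intro h
      exact absurd (SetLike.coe_injective h) (ne_of_gt hC4)

end NormalizerProof

/-- A commutative Moufang loop satisfies the normalizer condition if and only if
through every subloop there passes an ascending subnormal system. -/
theorem loopNormalizerCondition_iff_ascendingSubnormalSystem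
    (α : Type u) [CommMoufangLoop α] :
    LoopNormalizerCondition α ↔
      ∀ H : Subloop α, ∃ Sys : Set (Subloop α),
        IsAscendingSubnormalSystem Sys ∧ H ∈ Sys := by
  constructor
  · exact fun hnc H => forward_direction hnc H
  · intro hsys H hHtop
    obtain ⟨Sys, hSys, hH⟩ := hsys H
    obtain ⟨C, hCmem, hCsharp, hCnorm⟩ := hSys.normal H hH hHtop
    have hasc := hSys.ascending H hH hHtop
    refine ⟨C, ?_, hCnorm⟩
    refine lt_of_le_of_ne hCnorm.1 ?_
    intro h
    subst h
    exact hasc hCsharp.symm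
end

section
/- Every subloop of a commutative Moufang loop satisfying the normalizer condition itself satisfies the normalizer condition, and every quotient loop of a commutative Moufang loop satisfying the normalizer condition by a normal subloop satisfies the normalizer condition. -/
/-!  Basic theory of loops, commutative Moufang loops, their multiplication
groups, subloops, Frattini subloops, normality and normalizers. -/

universe u v

section AuxLemmas

variable {γ : Type u} [MLoop γ]

theorem MLoop.mul_left_cancel'' {a b c : γ} (h2 : a * b = a * c) : b = c := by
  have h3 := congrArg (MLoop.ldiv a) h2
  rwa [MLoop.ldiv_mul, MLoop.ldiv_mul] at h3

/-- The restriction of a subloop `K` to a subloop `A`, as a subloop of `A`. -/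
def Subloop.inSub (A : Subloop γ) (K : Subloop γ) : Subloop ↥A where
  carrier := {a : ↥A | (a : γ) ∈ K}
  one_mem' := K.one_mem'
  mul_mem' := fun ha hb => K.mul_mem' ha hb
  ldiv_mem' := fun ha hb => K.ldiv_mem' ha hb
  rdiv_mem' := fun ha hb => K.rdiv_mem' ha hb

/-- A subloop of a subloop `A`, as a subloop of the ambient loop. -/
def Subloop.toAmbient (A : Subloop γ) (H : Subloop ↥A) : Subloop γ where
  carrier := Subtype.val '' (H : Set ↥A)
  one_mem' := ⟨1, H.one_mem', rfl⟩
  mul_mem' := by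
    rintro _ _ ⟨a, ha, rfl⟩ ⟨b, hb, rfl⟩
    exact ⟨a * b, H.mul_mem' ha hb, rfl⟩
  ldiv_mem' := by
    rintro _ _ ⟨a, ha, rfl⟩ ⟨b, hb, rfl⟩
    exact ⟨MLoop.ldiv a b, H.ldiv_mem' ha hb, rfl⟩
  rdiv_mem' := by
    rintro _ _ ⟨a, ha, rfl⟩ ⟨b, hb, rfl⟩
    exact ⟨MLoop.rdiv a b, H.rdiv_mem' ha hb, rfl⟩

end AuxLemmas

/-- Every subloop of a commutative Moufang loop satisfying the normalizer
condition satisfies the normalizer condition, and so does every quotient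
(equivalently, every image under a surjective loop homomorphism). -/
theorem loopNormalizerCondition_subloop_and_quotient (α : Type u) [CommMoufangLoop α]
    (h : LoopNormalizerCondition α) :
    (∀ A : Subloop α, LoopNormalizerCondition ↥A) ∧
    (∀ (β : Type u) [CommMoufangLoop β] (θ : α → β), Function.Surjective θ →
      (∀ a b : α, θ (a * b) = θ a * θ b) → LoopNormalizerCondition β) := by
  constructor
  · -- subloop part
    intro A H' hH'
    set H : Subloop α := A.toAmbient H' with hHdef
    have hmemH : ∀ a : ↥A, (a : α) ∈ H ↔ a ∈ H' := by
      intro a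
      constructor
      · rintro ⟨b, hb, hba⟩
        rwa [Subtype.val_injective hba] at hb
      · intro ha; exact ⟨a, ha, rfl⟩
    have hHA : (H : Set α) ⊆ (A : Set α) := by
      rintro _ ⟨a, _, rfl⟩; exact a.2
    obtain ⟨a₀, ha₀⟩ : ∃ a : ↥A, a ∉ H' := by
      by_contra hcon
      push_neg at hcon
      exact hH' (SetLike.ext fun a => ⟨fun _ => trivial, fun _ => hcon a⟩)
    -- Zorn's lemma on subloops K ⊇ H with K ∩ A = H
    set 𝒞 : Set (Subloop α) := {K | H ≤ K ∧ (K : Set α) ∩ (A : Set α) = (H : Set α)} with h𝒞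
    have hH𝒞 : H ∈ 𝒞 := by
      refine ⟨le_refl H, ?_⟩
      apply Set.eq_of_subset_of_subset
      · exact fun x hx => hx.1
      · exact fun x hx => ⟨hx, hHA hx⟩
    have hchain : ∀ c ⊆ 𝒞, IsChain (· ≤ ·) c → ∀ y ∈ c, ∃ ub ∈ 𝒞, ∀ z ∈ c, z ≤ ub := by
      intro c hc hch y hy
      have hdir := hch.directedOn
      refine ⟨⟨{x | ∃ K ∈ c, x ∈ K}, ⟨y, hy, y.one_mem'⟩, ?_, ?_, ?_⟩, ⟨?_, ?_⟩, ?_⟩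
      · rintro a b ⟨K₁, hK₁, haK⟩ ⟨K₂, hK₂, hbK⟩
        obtain ⟨K₃, hK₃, h13, h23⟩ := hdir K₁ hK₁ K₂ hK₂
        exact ⟨K₃, hK₃, K₃.mul_mem' (h13 haK) (h23 hbK)⟩
      · rintro a b ⟨K₁, hK₁, haK⟩ ⟨K₂, hK₂, hbK⟩
        obtain ⟨K₃, hK₃, h13, h23⟩ := hdir K₁ hK₁ K₂ hK₂
        exact ⟨K₃, hK₃, K₃.ldiv_mem' (h13 haK) (h23 hbK)⟩
      · rintro a b ⟨K₁, hK₁, haK⟩ ⟨K₂, hK₂, hbK⟩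
        obtain ⟨K₃, hK₃, h13, h23⟩ := hdir K₁ hK₁ K₂ hK₂
        exact ⟨K₃, hK₃, K₃.rdiv_mem' (h13 haK) (h23 hbK)⟩
      · exact fun x hx => ⟨y, hy, (hc hy).1 hx⟩
      · apply Set.eq_of_subset_of_subset
        · rintro x ⟨⟨K, hK, hxK⟩, hxA⟩
          exact ((hc hK).2 ▸ (⟨hxK, hxA⟩ : x ∈ (K : Set α) ∩ (A : Set α)))
        · intro x hx
          exact ⟨⟨y, hy, (hc hy).1 hx⟩, hHA hx⟩
      · intro z hz x hx
        exact ⟨z, hz, hx⟩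
    obtain ⟨M, hHM, hMmem, hMmax⟩ := zorn_le_nonempty₀ 𝒞 hchain H hH𝒞
    have hMA : (M : Set α) ∩ (A : Set α) = (H : Set α) := hMmem.2
    have hMtop : M ≠ ⊤ := by
      intro heq
      have hall : (a₀ : α) ∈ (M : Set α) := by rw [heq]; trivial
      have h2 : (a₀ : α) ∈ (M : Set α) ∩ (A : Set α) := ⟨hall, a₀.2⟩
      rw [hMA] at h2
      exact ha₀ ((hmemH a₀).1 h2)
    obtain ⟨K, hMK, hKle, hKcoset⟩ := h M hMtop
    have hK𝒞 : K ∉ 𝒞 := by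
      intro hKmem
      exact hMK.not_ge (hMmax hKmem hMK.le)
    obtain ⟨b, hbK, hbA, hbH⟩ : ∃ b : α, b ∈ K ∧ b ∈ A ∧ b ∉ H := by
      by_contra hcon
      push_neg at hcon
      apply hK𝒞
      refine ⟨le_trans hHM hMK.le, Set.eq_of_subset_of_subset ?_ ?_⟩
      · rintro x ⟨hxK, hxA⟩; exact hcon x hxK hxA
      · intro x hx
        exact ⟨hMK.le (hHM hx), hHA hx⟩
    refine ⟨A.inSub K, ⟨?_, ?_⟩, ?_, ?_⟩
    · -- H' ≤ A.inSub K
      intro a ha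
      exact hMK.le (hHM ((hmemH a).2 ha))
    · -- strict
      intro hle
      exact hbH ((hmemH ⟨b, hbA⟩).2 (hle (hbK : (⟨b, hbA⟩ : ↥A) ∈ A.inSub K)))
    · intro a ha
      exact hMK.le (hHM ((hmemH a).2 ha))
    · -- coset condition inside A
      intro x hx y hy
      apply Set.eq_of_subset_of_subset
      · rintro _ ⟨_, ⟨s, hs, rfl⟩, rfl⟩
        -- x * (y * s) with s ∈ H'
        have hsM : (s : α) ∈ M := hHM ((hmemH s).2 hs)
        have hval : ((x : α) * ((y : α) * (s : α))) ∈ lcoset ((x : α) * (y : α)) (M : Set α) := by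
          rw [← hKcoset (x : α) hx (y : α) hy]
          exact ⟨_, ⟨(s : α), hsM, rfl⟩, rfl⟩
        obtain ⟨m, hm, hmeq⟩ := hval
        dsimp only at hmeq
        have hmA : m ∈ A := by
          have h1 : MLoop.ldiv ((x : α) * (y : α)) (((x : α) * (y : α)) * m) = m :=
            MLoop.ldiv_mul _ _
          rw [hmeq] at h1
          rw [← h1]
          exact A.ldiv_mem' (A.mul_mem' x.2 y.2)
            (A.mul_mem' x.2 (A.mul_mem' y.2 s.2))
        have hmH : m ∈ (H : Set α) := by
          rw [← hMA]; exact ⟨hm, hmA⟩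
        obtain ⟨s', hs', hs'val⟩ := hmH
        refine ⟨s', hs', ?_⟩
        apply Subtype.val_injective
        show ((x : α) * (y : α)) * (s' : α) = (x : α) * ((y : α) * (s : α))
        rw [hs'val]; exact hmeq
      · rintro _ ⟨s, hs, rfl⟩
        -- (x * y) * s with s ∈ H'
        have hsM : (s : α) ∈ M := hHM ((hmemH s).2 hs)
        have hval : (((x : α) * (y : α)) * (s : α)) ∈
            lcoset (x : α) (lcoset (y : α) (M : Set α)) := by
          rw [hKcoset (x : α) hx (y : α) hy]
          exact ⟨(s : α), hsM, rfl⟩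
        obtain ⟨_, ⟨m, hm, rfl⟩, hmeq⟩ := hval
        dsimp only at hmeq
        have hmA : m ∈ A := by
          have h1 : MLoop.ldiv (y : α) (MLoop.ldiv (x : α) ((x : α) * ((y : α) * m))) = m := by
            rw [MLoop.ldiv_mul, MLoop.ldiv_mul]
          rw [hmeq] at h1
          rw [← h1]
          exact A.ldiv_mem' y.2 (A.ldiv_mem' x.2
            (A.mul_mem' (A.mul_mem' x.2 y.2) s.2))
        have hmH : m ∈ (H : Set α) := by
          rw [← hMA]; exact ⟨hm, hmA⟩
        obtain ⟨s', hs', hs'val⟩ := hmH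
        refine ⟨y * s', ⟨s', hs', rfl⟩, ?_⟩
        apply Subtype.val_injective
        show (x : α) * ((y : α) * (s' : α)) = ((x : α) * (y : α)) * (s : α)
        rw [hs'val]; exact hmeq
  · -- quotient part
    intro β _ θ hsurj hhom H' hH'
    have hθ1 : θ 1 = 1 := by
      apply MLoop.mul_left_cancel'' (a := θ 1)
      rw [← hhom, MLoop.mul_one, MLoop.mul_one]
    have hθl : ∀ a b : α, θ (MLoop.ldiv a b) = MLoop.ldiv (θ a) (θ b) := by
      intro a b
      have h1 : θ a * θ (MLoop.ldiv a b) = θ b := by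
        rw [← hhom, MLoop.mul_ldiv]
      have h2 := congrArg (MLoop.ldiv (θ a)) h1
      rwa [MLoop.ldiv_mul] at h2
    have hθr : ∀ a b : α, θ (MLoop.rdiv a b) = MLoop.rdiv (θ a) (θ b) := by
      intro a b
      have h1 : θ (MLoop.rdiv a b) * θ b = θ a := by
        rw [← hhom, MLoop.rdiv_mul]
      have h2 := congrArg (fun w => MLoop.rdiv w (θ b)) h1
      simpa [MLoop.mul_rdiv] using h2
    set P : Subloop α :=
      { carrier := θ ⁻¹' (H' : Set β)
        one_mem' := by simp only [Set.mem_preimage, hθ1]; exact H'.one_mem'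
        mul_mem' := by
          intro a b ha hb
          simp only [Set.mem_preimage, hhom] at *
          exact H'.mul_mem' ha hb
        ldiv_mem' := by
          intro a b ha hb
          simp only [Set.mem_preimage, hθl] at *
          exact H'.ldiv_mem' ha hb
        rdiv_mem' := by
          intro a b ha hb
          simp only [Set.mem_preimage, hθr] at *
          exact H'.rdiv_mem' ha hb } with hPdef
    obtain ⟨b₀, hb₀⟩ : ∃ b : β, b ∉ H' := by
      by_contra hcon
      push_neg at hcon
      exact hH' (SetLike.ext fun a => ⟨fun _ => trivial, fun _ => hcon a⟩)
    have hPtop : P ≠ ⊤ := by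
      intro heq
      obtain ⟨a, rfl⟩ := hsurj b₀
      have : a ∈ P := heq ▸ trivial
      exact hb₀ this
    obtain ⟨K, hPK, hKle, hKcoset⟩ := h P hPtop
    obtain ⟨k₀, hk₀K, hk₀P⟩ : ∃ k, k ∈ K ∧ k ∉ P := by
      obtain ⟨k, hkK, hkP⟩ := SetLike.exists_of_lt hPK
      exact ⟨k, hkK, hkP⟩
    set Q : Subloop β :=
      { carrier := θ '' (K : Set α)
        one_mem' := ⟨1, K.one_mem', hθ1⟩
        mul_mem' := by
          rintro _ _ ⟨a, ha, rfl⟩ ⟨b, hb, rfl⟩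
          exact ⟨a * b, K.mul_mem' ha hb, hhom a b⟩
        ldiv_mem' := by
          rintro _ _ ⟨a, ha, rfl⟩ ⟨b, hb, rfl⟩
          exact ⟨MLoop.ldiv a b, K.ldiv_mem' ha hb, hθl a b⟩
        rdiv_mem' := by
          rintro _ _ ⟨a, ha, rfl⟩ ⟨b, hb, rfl⟩
          exact ⟨MLoop.rdiv a b, K.rdiv_mem' ha hb, hθr a b⟩ } with hQdef
    have hH'Q : H' ≤ Q := by
      intro b hb
      obtain ⟨a, rfl⟩ := hsurj b
      exact ⟨a, hPK.le (hb : a ∈ P), rfl⟩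
    refine ⟨Q, ⟨hH'Q, ?_⟩, hH'Q, ?_⟩
    · intro hle
      exact hk₀P (hle (⟨k₀, hk₀K, rfl⟩ : θ k₀ ∈ Q))
    · -- coset condition
      rintro _ ⟨x, hxK, rfl⟩ _ ⟨y, hyK, rfl⟩
      apply Set.eq_of_subset_of_subset
      · rintro _ ⟨_, ⟨s, hs, rfl⟩, rfl⟩
        obtain ⟨a, rfl⟩ := hsurj s
        have haP : a ∈ P := hs
        have hval : (x * (y * a)) ∈ lcoset (x * y) (P : Set α) := by
          rw [← hKcoset x hxK y hyK]
          exact ⟨_, ⟨a, haP, rfl⟩, rfl⟩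
        obtain ⟨p, hp, hpeq⟩ := hval
        dsimp only at hpeq
        refine ⟨θ p, hp, ?_⟩
        simpa [hhom] using congrArg θ hpeq
      · rintro _ ⟨s, hs, rfl⟩
        obtain ⟨a, rfl⟩ := hsurj s
        have haP : a ∈ P := hs
        have hval : ((x * y) * a) ∈ lcoset x (lcoset y (P : Set α)) := by
          rw [hKcoset x hxK y hyK]
          exact ⟨a, haP, rfl⟩
        obtain ⟨_, ⟨p, hp, rfl⟩, hpeq⟩ := hval
        dsimp only at hpeq
        refine ⟨θ y * θ p, ⟨θ p, hp, rfl⟩, ?_⟩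
        simpa [hhom] using congrArg θ hpeq
end

section
/- Let L be a centrally nilpotent commutative Moufang loop of class n with multiplication group 𝔐. Then for every subloop H of L the series of consecutive normalizers H₀ = H, H_{i+1} = N_L(H_i) reaches L after at most n steps, i.e. H_n = L (indeed Z_i(L) ⊆ H_i for every i); and for every subgroup 𝔑 of 𝔐 the series of consecutive normalizers 𝔑₀ = 𝔑, 𝔑_{i+1} = N_𝔐(𝔑_i) reaches 𝔐 after at most 2n − 1 steps. -/
/-!  Basic theory of loops, commutative Moufang loops, their multiplication
groups, subloops, Frattini subloops, normality and normalizers. -/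

universe u v

/-! ### Auxiliary development for Proposition 4 -/

namespace Prop4

open MLoop

section Basic

variable {α : Type u} [CommMoufangLoop α]

lemma comm (a b : α) : a * b = b * a := CommMoufangLoop.mul_comm a b

lemma moufang (x y z : α) : (x * x) * (y * z) = (x * y) * (x * z) :=
  CommMoufangLoop.moufang x y z

lemma mul_left_cancel {a b c : α} (h : a * b = a * c) : b = c := by
  have := congrArg (fun t => ldiv a t) h
  simpa [ldiv_mul] using this

lemma mul_right_cancel {a b c : α} (h : b * a = c * a) : b = c := by
  rw [comm b a, comm c a] at h; exact mul_left_cancel h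

lemma B (x y : α) : (x * y) * x = (x * x) * y := by
  have := moufang x y (1 : α)
  rw [MLoop.mul_one, MLoop.mul_one] at this
  exact this.symm

lemma x_xz (x z : α) : x * (x * z) = (x * x) * z := by
  rw [comm x (x * z)]; exact B x z

/-- the inverse -/
noncomputable def inv (x : α) : α := ldiv x 1

lemma mul_inv (x : α) : x * inv x = 1 := mul_ldiv x 1

lemma inv_mul (x : α) : inv x * x = 1 := by rw [comm]; exact mul_inv x

lemma inv_invol (x : α) : inv (inv x) = x := by
  have : ldiv (inv x) (inv x * x) = x := ldiv_mul (inv x) x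
  rw [inv_mul] at this
  exact this

lemma D (x z : α) : (x * x) * (inv x * z) = x * z := by
  have := moufang x (inv x) z
  rw [mul_inv, MLoop.one_mul] at this
  exact this

lemma IP (x z : α) : inv x * (x * z) = z := by
  apply mul_left_cancel (a := x * x)
  rw [D, x_xz]

lemma IP' (x z : α) : x * (inv x * z) = z := by
  have := IP (inv x) z
  rwa [inv_invol] at this

lemma ldiv_eq (x u : α) : ldiv x u = inv x * u := by
  have h : x * (inv x * u) = u := by
    have := IP (inv x) u
    rw [inv_invol] at this
    exact this
  have := congrArg (fun t => ldiv x t) h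
  simpa [ldiv_mul] using this.symm

lemma rdiv_eq (u x : α) : rdiv u x = inv x * u := by
  have h : (inv x * u) * x = u := by
    rw [comm]
    have := IP (inv x) u
    rw [inv_invol] at this
    exact this
  have := congrArg (fun t => rdiv t x) h
  simpa [mul_rdiv] using this.symm

lemma one_inv : inv (1 : α) = 1 := by
  have := mul_inv (1 : α); rwa [MLoop.one_mul] at this

lemma sq_inv (x : α) : (x * x) * (inv x * inv x) = 1 := by
  have := moufang x (inv x) (inv x)
  rw [mul_inv, MLoop.one_mul] at this
  exact this

lemma inv_mul_dist (x y : α) : inv (x * y) = inv x * inv y := by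
  have key : (inv x * inv y) * (x * y) = 1 := by
    have h1 : x * y = inv x * ((x * x) * y) := by
      rw [← x_xz, IP]
    rw [h1]
    have h2 := moufang (inv x) (inv y) ((x * x) * y)
    rw [← h2]
    have h3 : inv y * ((x * x) * y) = x * x := by
      rw [comm (x*x) y, IP]
    rw [h3]
    rw [comm (inv x * inv x) (x*x)]
    exact sq_inv x
  have : x * y * (inv x * inv y) = 1 := by rw [comm]; exact key
  have := congrArg (fun t => ldiv (x * y) t) this
  simpa [ldiv_mul, inv] using this.symm

lemma rightTrans_eq (a : α) : rightTrans a = leftTrans a := by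
  apply Equiv.ext
  intro y
  show y * a = a * y
  exact comm y a

lemma leftTrans_apply (a y : α) : leftTrans a y = a * y := rfl

lemma leftTrans_symm_apply (a y : α) : (leftTrans a)⁻¹ y = ldiv a y := rfl

lemma leftTrans_inv (a : α) : (leftTrans a)⁻¹ = leftTrans (inv a) := by
  apply Equiv.ext
  intro y
  rw [leftTrans_symm_apply, ldiv_eq]
  rfl

lemma leftTrans_one : leftTrans (1 : α) = 1 := by
  apply Equiv.ext; intro y; show (1 : α) * y = y; exact MLoop.one_mul y

lemma leftTrans_mem : ∀ a : α, leftTrans a ∈ multGroup α := fun a =>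
  Subgroup.subset_closure (Or.inl ⟨a, rfl⟩)

end Basic

end Prop4

namespace Prop4

open MLoop

section UCBasic

variable {α : Type u} [CommMoufangLoop α]

lemma assoc_def (a b c : α) :
    (a * b) * c = (a * (b * c)) * loopAssociator a b c :=
  (mul_ldiv _ _).symm

lemma associator_eq (a b c : α) :
    loopAssociator a b c = ldiv (a * (b * c)) ((a * b) * c) := rfl

lemma ldiv_self (u : α) : ldiv u u = 1 := by
  have := ldiv_mul u (1 : α)
  rwa [MLoop.mul_one] at this

lemma assoc_one_right (a b : α) : loopAssociator a b 1 = 1 := by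
  rw [associator_eq, MLoop.mul_one, MLoop.mul_one, ldiv_self]

lemma assoc_one_mid (a b : α) : loopAssociator a 1 b = 1 := by
  rw [associator_eq, MLoop.one_mul, MLoop.mul_one, ldiv_self]

lemma assoc_one_left (a b : α) : loopAssociator 1 a b = 1 := by
  rw [associator_eq, MLoop.one_mul, MLoop.one_mul, ldiv_self]

/-- `ldiv u v ∈ S` iff `v ∈ u·S`. -/
lemma ldiv_mem_iff {u v : α} {S : Set α} :
    ldiv u v ∈ S ↔ v ∈ lcoset u S := by
  constructor
  · intro h
    exact ⟨ldiv u v, h, mul_ldiv u v⟩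
  · rintro ⟨s, hs, rfl⟩
    rwa [ldiv_mul]

lemma mem_lcoset_iff {u v : α} {S : Set α} :
    v ∈ lcoset u S ↔ ∃ s ∈ S, u * s = v := Iff.rfl

lemma self_mem_lcoset {S : Set α} (h1 : (1 : α) ∈ S) (u : α) : u ∈ lcoset u S :=
  ⟨1, h1, MLoop.mul_one u⟩

lemma assoc_mem_iff {a b c : α} {S : Set α} :
    loopAssociator a b c ∈ S ↔ (a * b) * c ∈ lcoset (a * (b * c)) S :=
  ldiv_mem_iff

/-- 1 is in every term of the upper central series. -/
lemma one_mem_UC : ∀ i, (1 : α) ∈ upperCentral α i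
  | 0 => rfl
  | i + 1 => fun a b =>
      ⟨by rw [assoc_one_right]; exact one_mem_UC i,
       by rw [assoc_one_mid]; exact one_mem_UC i,
       by rw [assoc_one_left]; exact one_mem_UC i⟩

lemma mem_UC_succ {x : α} {i : ℕ} (h : x ∈ upperCentral α (i+1)) (a b : α) :
    loopAssociator a b x ∈ upperCentral α i ∧
    loopAssociator a x b ∈ upperCentral α i ∧
    loopAssociator x a b ∈ upperCentral α i := h a b

lemma UC_mono_succ (i : ℕ) : upperCentral α i ⊆ upperCentral α (i+1) := by
  induction i with
  | zero =>
    intro x hx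
    rcases hx with rfl
    exact one_mem_UC 1
  | succ i ih =>
    intro x hx
    intro a b
    exact ⟨ih (hx a b).1, ih (hx a b).2.1, ih (hx a b).2.2⟩

lemma UC_mono {i j : ℕ} (h : i ≤ j) : upperCentral α i ⊆ upperCentral α j := by
  induction j with
  | zero => rw [Nat.le_zero.mp h]
  | succ j ih =>
    rcases Nat.lt_or_ge i (j+1) with h' | h'
    · exact (ih (Nat.lt_succ_iff.mp h')).trans (UC_mono_succ j)
    · rw [Nat.le_antisymm h h']

/-- all associators with an entry in `UC i` lie in `UC i`. -/
lemma assocZ' {t : α} {i : ℕ} (ht : t ∈ upperCentral α i) (a b : α) :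
    loopAssociator a b t ∈ upperCentral α i ∧
    loopAssociator a t b ∈ upperCentral α i ∧
    loopAssociator t a b ∈ upperCentral α i := by
  cases i with
  | zero =>
    rcases ht with rfl
    exact ⟨by rw [assoc_one_right]; rfl, by rw [assoc_one_mid]; rfl,
      by rw [assoc_one_left]; rfl⟩
  | succ i =>
    exact ⟨UC_mono_succ i (ht a b).1, UC_mono_succ i (ht a b).2.1,
      UC_mono_succ i (ht a b).2.2⟩

/-- Iterated left cosets of (the carrier of) a subloop. -/
inductive CosetLike (K : Set α) : Set α → Prop
  | base : CosetLike K K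
  | step (x : α) {S : Set α} : CosetLike K S → CosetLike K (lcoset x S)

/-- Main stability lemma: membership in an iterated coset of a subloop
containing `UC i` is invariant under right multiplication by elements
of `UC i`. -/
lemma coset_stable :
    ∀ (i : ℕ) (K : Subloop α), upperCentral α i ⊆ (K : Set α) →
      ∀ {S : Set α}, CosetLike (K : Set α) S →
      ∀ {t : α}, t ∈ upperCentral α i → ∀ u, u ∈ S ↔ u * t ∈ S := by
  intro i
  induction i with
  | zero =>
    intro K _ S _ t ht u
    rcases ht with rfl
    rw [MLoop.mul_one]
  | succ i ih =>
    intro K hK S hS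
    induction hS with
    | base =>
      intro t ht u
      constructor
      · intro hu; exact K.mul_mem' hu (hK ht)
      · intro hu
        have : rdiv (u * t) t ∈ (K : Set α) := K.rdiv_mem' hu (hK ht)
        rwa [mul_rdiv] at this
    | step x hS0 ihS =>
      rename_i S0
      intro t ht u
      have hK' : upperCentral α i ⊆ (K : Set α) := (UC_mono_succ i).trans hK
      constructor
      · rintro ⟨v, hv, rfl⟩
        have hs : loopAssociator x v t ∈ upperCentral α i := (ht x v).1
        have hvt : v * t ∈ S0 := (ihS ht v).mp hv
        have h1 : x * (v * t) ∈ lcoset x S0 := ⟨v * t, hvt, rfl⟩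
        have h2 := (ih K hK' (CosetLike.step x hS0) hs (x * (v * t))).mp h1
        rwa [← assoc_def] at h2
      · intro hu
        set v0 := ldiv x u with hv0
        have hu' : u = x * v0 := (mul_ldiv x u).symm
        have hs : loopAssociator x v0 t ∈ upperCentral α i := (ht x v0).1
        have heq : u * t = (x * (v0 * t)) * loopAssociator x v0 t := by
          rw [hu']; exact assoc_def x v0 t
        have h2 : (x * (v0 * t)) * loopAssociator x v0 t ∈ lcoset x S0 := by
          rw [← heq]; exact hu
        have h3 : x * (v0 * t) ∈ lcoset x S0 :=
          (ih K hK' (CosetLike.step x hS0) hs (x * (v0 * t))).mpr h2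
        rcases h3 with ⟨w, hw, hww⟩
        have : v0 * t = w := mul_left_cancel hww.symm
        have h4 : v0 ∈ S0 := (ihS ht v0).mpr (this ▸ hw)
        exact ⟨v0, h4, hu'.symm⟩

end UCBasic

end Prop4

namespace Prop4

open MLoop

section ModLevel

variable {α : Type u} [CommMoufangLoop α]

/-- closure conditions for a subloop carrier -/
def IsSub (S : Set α) : Prop :=
  (1 : α) ∈ S ∧
  (∀ {a b : α}, a ∈ S → b ∈ S → a * b ∈ S) ∧
  (∀ {a b : α}, a ∈ S → b ∈ S → ldiv a b ∈ S) ∧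
  (∀ {a b : α}, a ∈ S → b ∈ S → rdiv a b ∈ S)

/-- package a closed set as a subloop -/
def mk_subloop {S : Set α} (h : IsSub S) : Subloop α where
  carrier := S
  one_mem' := h.1
  mul_mem' := h.2.1
  ldiv_mem' := h.2.2.1
  rdiv_mem' := h.2.2.2

variable {j : ℕ} (hj : IsSub (upperCentral α j))
/-- congruence modulo `UC j` : `v` lies in the class of `u` -/
def Req (j : ℕ) (u v : α) : Prop := v ∈ lcoset u (upperCentral α j)

include hj in
lemma stab {S : Set α} (hS : CosetLike (upperCentral α j) S)
    {t : α} (ht : t ∈ upperCentral α j) (u : α) : u ∈ S ↔ u * t ∈ S :=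
  coset_stable j (mk_subloop hj) (fun _ h => h) hS ht u

omit hj in
lemma cl_coset (u : α) : CosetLike (upperCentral α j) (lcoset u (upperCentral α j)) :=
  CosetLike.step u CosetLike.base

omit hj in
lemma req_refl (u : α) : Req j u u := self_mem_lcoset (one_mem_UC j) u

omit hj in
lemma req_of {u t : α} (ht : t ∈ upperCentral α j) : Req j u (u * t) :=
  ⟨t, ht, rfl⟩

include hj in
lemma req_symm {u v : α} (h : Req j u v) : Req j v u := by
  rcases h with ⟨t, ht, rfl⟩
  exact (stab hj (cl_coset (u*t)) ht u).mpr (req_refl (u*t))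

include hj in
lemma req_trans {u v w : α} (h1 : Req j u v) (h2 : Req j v w) : Req j u w := by
  rcases h2 with ⟨t, ht, rfl⟩
  exact (stab hj (cl_coset u) ht v).mp h1

include hj in
lemma class_eq {u v : α} (h : Req j u v) :
    lcoset u (upperCentral α j) = lcoset v (upperCentral α j) := by
  ext w
  constructor
  · intro hw
    rcases req_symm hj h with ⟨t, ht, rfl⟩
    rcases hw with ⟨s, hs, rfl⟩
    have h1 : Req j (v*t) (v*t*s) := req_of hs
    exact req_trans hj (req_trans hj (req_refl v) (req_of ht)) h1
  · intro hw
    exact req_trans hj h hw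

include hj in
lemma nlem (c u : α) :
    lcoset c (lcoset u (upperCentral α j)) = lcoset (c*u) (upperCentral α j) := by
  ext w
  constructor
  · rintro ⟨v, ⟨t, ht, rfl⟩, rfl⟩
    -- w = c * (u * t)
    have hs : loopAssociator c u t ∈ upperCentral α j := (assocZ' ht c u).1
    have heq : (c*u)*t = (c*(u*t)) * loopAssociator c u t := assoc_def c u t
    have h1 : (c*u)*t ∈ lcoset (c*u) (upperCentral α j) := req_of ht
    have h2 : c*(u*t) ∈ lcoset (c*u) (upperCentral α j) := by
      have := (stab hj (cl_coset (c*u)) hs (c*(u*t))).mpr (by rw [← heq]; exact h1)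
      exact this
    exact h2
  · rintro ⟨t, ht, rfl⟩
    -- w = (c*u)*t
    have hs : loopAssociator c u t ∈ upperCentral α j := (assocZ' ht c u).1
    have heq : (c*u)*t = (c*(u*t)) * loopAssociator c u t := assoc_def c u t
    have hcl : CosetLike (upperCentral α j) (lcoset c (lcoset u (upperCentral α j))) :=
      CosetLike.step c (cl_coset u)
    have h1 : c*(u*t) ∈ lcoset c (lcoset u (upperCentral α j)) :=
      ⟨u*t, req_of ht, rfl⟩
    have h2 := (stab hj hcl hs (c*(u*t))).mp h1
    rwa [← heq] at h2

include hj in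
lemma req_mull {u v : α} (c : α) (h : Req j u v) : Req j (c*u) (c*v) := by
  have : c*v ∈ lcoset c (lcoset u (upperCentral α j)) := ⟨v, h, rfl⟩
  rwa [nlem hj] at this

include hj in
lemma req_mulr {u v : α} (c : α) (h : Req j u v) : Req j (u*c) (v*c) := by
  rw [comm u c, comm v c]; exact req_mull hj c h

include hj in
lemma req_cancel_left {c u v : α} (h : Req j (c*u) (c*v)) : Req j u v := by
  have h2 : c * v ∈ lcoset c (lcoset u (upperCentral α j)) := by
    rw [nlem hj]; exact h
  rcases h2 with ⟨w, hw, hww⟩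
  have : w = v := mul_left_cancel hww
  rwa [this] at hw

include hj in
lemma req_cancel_right {c u v : α} (h : Req j (u*c) (v*c)) : Req j u v := by
  rw [comm u c, comm v c] at h; exact req_cancel_left hj h

omit hj in
lemma req_assoc {a b c : α} (h : loopAssociator a b c ∈ upperCentral α j) :
    Req j (a*(b*c)) ((a*b)*c) :=
  assoc_mem_iff.mp h

include hj in
lemma req_mem {u v : α} (h : Req j u v) {S : Set α}
    (hS : CosetLike (upperCentral α j) S) (hu : u ∈ S) : v ∈ S := by
  rcases h with ⟨t, ht, rfl⟩
  exact (stab hj hS ht u).mp hu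

end ModLevel

section UCSub

variable {α : Type u} [CommMoufangLoop α]

/-- the "central modulo `UC j`" property -/
def Aprop (j : ℕ) (z : α) : Prop := ∀ a b : α, Req j (a*(b*z)) ((a*b)*z)

variable {j : ℕ} (hj : IsSub (upperCentral α j))

include hj in
lemma UC_succ_iff_A {z : α} : z ∈ upperCentral α (j+1) ↔ Aprop j z := by
  constructor
  · intro hz a b
    exact req_assoc ((hz a b).1)
  · intro hA a b
    refine ⟨?_, ?_, ?_⟩
    · -- loopAssociator a b z
      exact assoc_mem_iff.mpr (hA a b)
    · -- loopAssociator a z b : need (a*z)*b ∈ class of a*(z*b)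
      apply assoc_mem_iff.mpr
      have h1 : Req j (a*(z*b)) ((a*b)*z) := by
        rw [comm z b]; exact hA a b
      have h2 : Req j ((a*z)*b) ((a*b)*z) := by
        rw [comm (a*z) b]
        have h3 : Req j (b*(a*z)) ((b*a)*z) := hA b a
        rwa [comm b a] at h3
      exact req_trans hj h1 (req_symm hj h2)
    · -- loopAssociator z a b : need (z*a)*b ∈ class of z*(a*b)
      apply assoc_mem_iff.mpr
      have h1 : Req j (z*(a*b)) ((a*b)*z) := by rw [comm z (a*b)]; exact req_refl _
      have h2 : Req j ((z*a)*b) ((a*b)*z) := by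
        rw [comm z a, comm (a*z) b]
        have h3 : Req j (b*(a*z)) ((b*a)*z) := hA b a
        rwa [comm b a] at h3
      exact req_trans hj h1 (req_symm hj h2)

omit hj in
lemma A_one : Aprop j (1 : α) := by
  intro a b
  rw [MLoop.mul_one, MLoop.mul_one]
  exact req_refl _

include hj in
lemma A_mul {z w : α} (hz : Aprop j z) (hw : Aprop j w) : Aprop j (z*w) := by
  intro a b
  have s4 : Req j (a*(b*(z*w))) (a*((b*z)*w)) := req_mull hj a (hw b z)
  have s3 : Req j (a*((b*z)*w)) ((a*(b*z))*w) := hw a (b*z)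
  have s2 : Req j ((a*(b*z))*w) (((a*b)*z)*w) := req_mulr hj w (hz a b)
  have s1 : Req j (((a*b)*z)*w) ((a*b)*(z*w)) := req_symm hj (hw (a*b) z)
  exact req_trans hj (req_trans hj (req_trans hj s4 s3) s2) s1

include hj in
lemma A_inv {z : α} (hz : Aprop j z) : Aprop j (inv z) := by
  intro a b
  have e1 : Req j (z*((a*b)*inv z)) (a*b) := by
    have h1 := hz (a*b) (inv z)
    rw [inv_mul, MLoop.mul_one] at h1
    rw [comm z ((a*b)*inv z)]
    exact req_symm hj h1
  have e2 : Req j (z*(a*(b*inv z))) (a*b) := by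
    rw [comm z (a*(b*inv z))]
    have h3 : Req j ((a*(b*inv z))*z) (a*((b*inv z)*z)) := req_symm hj (hz a (b*inv z))
    have h4 : Req j ((b*inv z)*z) b := by
      have h5 := hz b (inv z)
      rw [inv_mul, MLoop.mul_one] at h5
      exact req_symm hj h5
    exact req_trans hj h3 (req_mull hj a h4)
  exact req_cancel_left hj (req_trans hj e2 (req_symm hj e1))

lemma UC_isSub : ∀ i : ℕ, IsSub (upperCentral α i) := by
  intro i
  induction i with
  | zero =>
    refine ⟨rfl, ?_, ?_, ?_⟩
    · rintro a b rfl rfl; rw [MLoop.mul_one]; rfl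
    · rintro a b rfl rfl; rw [ldiv_self]; rfl
    · rintro a b rfl rfl
      show rdiv 1 1 = 1
      rw [rdiv_eq, one_inv, MLoop.one_mul]
  | succ i ih =>
    have hmul : ∀ {a b : α}, a ∈ upperCentral α (i+1) → b ∈ upperCentral α (i+1) →
        a * b ∈ upperCentral α (i+1) := by
      intro a b ha hb
      exact (UC_succ_iff_A ih).mpr (A_mul ih ((UC_succ_iff_A ih).mp ha) ((UC_succ_iff_A ih).mp hb))
    have hinv : ∀ {a : α}, a ∈ upperCentral α (i+1) → inv a ∈ upperCentral α (i+1) := by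
      intro a ha
      exact (UC_succ_iff_A ih).mpr (A_inv ih ((UC_succ_iff_A ih).mp ha))
    refine ⟨one_mem_UC (i+1), fun ha hb => hmul ha hb, ?_, ?_⟩
    · intro a b ha hb
      rw [ldiv_eq]
      exact hmul (hinv ha) hb
    · intro a b ha hb
      rw [rdiv_eq]
      exact hmul (hinv hb) ha

/-- `UC i` as a subloop -/
noncomputable def ZK (i : ℕ) : Subloop α := mk_subloop (UC_isSub i)

lemma inv_mem_UC {i : ℕ} {a : α} (h : a ∈ upperCentral α i) :
    inv a ∈ upperCentral α i := by
  have := (UC_isSub i).2.2.1 h (one_mem_UC i)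
  rwa [ldiv_eq, MLoop.mul_one] at this

end UCSub

end Prop4

namespace Prop4

open MLoop

section Part1

variable {α : Type u} [CommMoufangLoop α]

lemma coset_swallow {K : Subloop α} {i : ℕ} (hK : upperCentral α i ⊆ (K : Set α))
    {p q : α} (hassoc : ∀ k, loopAssociator p q k ∈ upperCentral α i) :
    lcoset p (lcoset q (K : Set α)) = lcoset (p*q) (K : Set α) := by
  ext w
  constructor
  · rintro ⟨u, ⟨k, hk, rfl⟩, rfl⟩
    have hs := hassoc k
    have heq : (p*q)*k = (p*(q*k)) * loopAssociator p q k := assoc_def p q k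
    have h1 : (p*q)*k ∈ lcoset (p*q) (K : Set α) := ⟨k, hk, rfl⟩
    have h2 := (coset_stable i K hK (CosetLike.step (p*q) CosetLike.base) hs
      (p*(q*k))).mpr (by rw [← heq]; exact h1)
    exact h2
  · rintro ⟨k, hk, rfl⟩
    have hs := hassoc k
    have heq : (p*q)*k = (p*(q*k)) * loopAssociator p q k := assoc_def p q k
    have hcl : CosetLike (K : Set α) (lcoset p (lcoset q (K : Set α))) :=
      CosetLike.step p (CosetLike.step q CosetLike.base)
    have h1 : p*(q*k) ∈ lcoset p (lcoset q (K : Set α)) := ⟨q*k, ⟨k, hk, rfl⟩, rfl⟩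
    have h2 := (coset_stable i K hK hcl hs (p*(q*k))).mp h1
    rwa [← heq] at h2

lemma lcoset_self {K : Subloop α} {k : α} (hk : k ∈ K) :
    lcoset k (K : Set α) = (K : Set α) := by
  ext u
  constructor
  · rintro ⟨k', hk', rfl⟩; exact K.mul_mem' hk hk'
  · intro hu
    exact ⟨ldiv k u, K.ldiv_mem' hk hu, mul_ldiv k u⟩

/-- `(w·k)·K = w·K` for `w ∈ UC (i+1)`, `k ∈ K ⊇ UC i`. -/
lemma lcoset_mul_k {K : Subloop α} {i : ℕ} (hK : upperCentral α i ⊆ (K : Set α))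
    {w k : α} (hw : w ∈ upperCentral α (i+1)) (hk : k ∈ K) :
    lcoset (w*k) (K : Set α) = lcoset w (K : Set α) := by
  have h1 : lcoset w (lcoset k (K : Set α)) = lcoset (w*k) (K : Set α) :=
    coset_swallow hK (fun k' => (hw k k').2.2)
  rw [← h1, lcoset_self hk]

/-- membership in `w·K` is stable under multiplication by elements of `K`,
for `w ∈ UC (i+1)`. -/
lemma mem_lcoset_mul_k {K : Subloop α} {i : ℕ} (hK : upperCentral α i ⊆ (K : Set α))
    {w k : α} (hw : w ∈ upperCentral α (i+1)) (hk : k ∈ K) (u : α) :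
    u ∈ lcoset w (K : Set α) ↔ u*k ∈ lcoset w (K : Set α) := by
  constructor
  · rintro ⟨k', hk', rfl⟩
    have hs : loopAssociator w k' k ∈ upperCentral α i := (hw k' k).2.2
    have heq : (w*k')*k = (w*(k'*k)) * loopAssociator w k' k := assoc_def w k' k
    have h1 : w*(k'*k) ∈ lcoset w (K : Set α) := ⟨k'*k, K.mul_mem' hk' hk, rfl⟩
    have h2 := (coset_stable i K hK (CosetLike.step w CosetLike.base) hs
      (w*(k'*k))).mp h1
    rwa [← heq] at h2
  · intro hu
    set c := ldiv w u with hc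
    have hu' : u = w * c := (mul_ldiv w u).symm
    have hs : loopAssociator w c k ∈ upperCentral α i := (hw c k).2.2
    have heq : (w*c)*k = (w*(c*k)) * loopAssociator w c k := assoc_def w c k
    have h2 : (w*(c*k)) * loopAssociator w c k ∈ lcoset w (K : Set α) := by
      rw [← heq, ← hu']; exact hu
    have h3 := (coset_stable i K hK (CosetLike.step w CosetLike.base) hs
      (w*(c*k))).mpr h2
    rcases h3 with ⟨k5, hk5, hkeq⟩
    have h4 : c*k = k5 := mul_left_cancel hkeq.symm
    have h5 : c*k ∈ K := h4 ▸ hk5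
    have h6 : c ∈ K := by
      have := K.rdiv_mem' h5 hk
      rwa [mul_rdiv] at this
    exact ⟨c, h6, hu'.symm⟩

/-- the carrier of the subloop generated by `UC (i+1)` and `K`. -/
def Pcar (K : Subloop α) (i : ℕ) : Set α :=
  {u | ∃ z ∈ upperCentral α (i+1), u ∈ lcoset z (K : Set α)}

lemma key_shift {K : Subloop α} {i : ℕ} (hK : upperCentral α i ⊆ (K : Set α))
    {x z₁ z₂ : α} (hz₁ : z₁ ∈ upperCentral α (i+1)) (hz₂ : z₂ ∈ upperCentral α (i+1))
    (hx : x ∈ lcoset z₁ (K : Set α)) :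
    x * z₂ ∈ lcoset (z₂*z₁) (K : Set α) ∧
      lcoset (x*z₂) (K : Set α) = lcoset (z₂*z₁) (K : Set α) := by
  have hmem : x * z₂ ∈ lcoset (z₂*z₁) (K : Set α) := by
    rw [comm x z₂]
    have h1 : z₂ * x ∈ lcoset z₂ (lcoset z₁ (K : Set α)) := ⟨x, hx, rfl⟩
    rwa [coset_swallow hK (fun k => (hz₂ z₁ k).2.2)] at h1
  refine ⟨hmem, ?_⟩
  rcases hmem with ⟨k₃, hk₃, heq⟩
  rw [← heq, lcoset_mul_k hK ((UC_isSub (i+1)).2.1 hz₂ hz₁) hk₃]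

lemma Pcar_mul {K : Subloop α} {i : ℕ} (hK : upperCentral α i ⊆ (K : Set α))
    {u₁ u₂ z₁ z₂ : α} (hz₁ : z₁ ∈ upperCentral α (i+1)) (hz₂ : z₂ ∈ upperCentral α (i+1))
    (h1 : u₁ ∈ lcoset z₁ (K : Set α)) (h2 : u₂ ∈ lcoset z₂ (K : Set α)) :
    u₁ * u₂ ∈ lcoset (z₂*z₁) (K : Set α) := by
  have hm : u₁ * u₂ ∈ lcoset (u₁*z₂) (K : Set α) := by
    have h3 : u₁ * u₂ ∈ lcoset u₁ (lcoset z₂ (K : Set α)) := ⟨u₂, h2, rfl⟩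
    rwa [coset_swallow hK (fun k => (hz₂ u₁ k).2.1)] at h3
  rwa [(key_shift hK hz₁ hz₂ h1).2] at hm

/-- the subloop generated by `UC (i+1)` and `K`. -/
noncomputable def Psub (K : Subloop α) (i : ℕ) (hK : upperCentral α i ⊆ (K : Set α)) :
    Subloop α where
  carrier := Pcar K i
  one_mem' := ⟨1, one_mem_UC (i+1), self_mem_lcoset K.one_mem' 1⟩
  mul_mem' := by
    rintro u₁ u₂ ⟨z₁, hz₁, h1⟩ ⟨z₂, hz₂, h2⟩
    exact ⟨z₂*z₁, (UC_isSub (i+1)).2.1 hz₂ hz₁, Pcar_mul hK hz₁ hz₂ h1 h2⟩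
  ldiv_mem' := by
    rintro u₁ u₂ ⟨z₁, hz₁, h1⟩ ⟨z₂, hz₂, h2⟩
    set c := ldiv u₁ u₂ with hcdef
    have hc1 : u₁ * c = u₂ := mul_ldiv u₁ u₂
    -- c * u₁ ∈ (c*z₁)·K
    have h3 : c * u₁ ∈ lcoset (c*z₁) (K : Set α) := by
      have h4 : c * u₁ ∈ lcoset c (lcoset z₁ (K : Set α)) := ⟨u₁, h1, rfl⟩
      rwa [coset_swallow hK (fun k => (hz₁ c k).2.1)] at h4
    have h5 : u₂ ∈ lcoset (c*z₁) (K : Set α) := by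
      rw [← hc1, comm u₁ c]; exact h3
    -- so (c*z₁)·k₆ = u₂ ∈ z₂·K, hence c*z₁ ∈ z₂·K
    rcases h5 with ⟨k₆, hk₆, heq₆⟩
    have h7 : c*z₁ ∈ lcoset z₂ (K : Set α) := by
      have h8 : (c*z₁)*k₆ ∈ lcoset z₂ (K : Set α) := by
        rw [show (c*z₁)*k₆ = u₂ from heq₆]; exact h2
      exact (mem_lcoset_mul_k hK hz₂ hk₆ (c*z₁)).mpr h8
    -- write z₂ = z₃ * z₁
    set z₃ := rdiv z₂ z₁ with hz3def
    have hz₃ : z₃ ∈ upperCentral α (i+1) := (UC_isSub (i+1)).2.2.2 hz₂ hz₁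
    have hz32 : z₃ * z₁ = z₂ := rdiv_mul z₁ z₂
    have h9 : c*z₁ ∈ lcoset z₁ (lcoset z₃ (K : Set α)) := by
      rw [coset_swallow hK (fun k => (hz₁ z₃ k).2.2), comm z₁ z₃, hz32]
      exact h7
    rcases h9 with ⟨v, hv, heq₉⟩
    have heq₉' : z₁ * v = z₁ * c := by
      rw [show z₁ * v = c * z₁ from heq₉, comm c z₁]
    have h10 : v = c := mul_left_cancel heq₉'
    exact ⟨z₃, hz₃, h10 ▸ hv⟩
  rdiv_mem' := by
    rintro u₁ u₂ hu₁ hu₂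
    rw [rdiv_eq, ← ldiv_eq]
    -- rdiv u₁ u₂ = ldiv u₂ u₁
    rcases hu₁ with ⟨z₁, hz₁, h1⟩
    rcases hu₂ with ⟨z₂, hz₂, h2⟩
    -- reuse the ldiv argument with roles swapped
    set c := ldiv u₂ u₁ with hcdef
    have hc1 : u₂ * c = u₁ := mul_ldiv u₂ u₁
    have h3 : c * u₂ ∈ lcoset (c*z₂) (K : Set α) := by
      have h4 : c * u₂ ∈ lcoset c (lcoset z₂ (K : Set α)) := ⟨u₂, h2, rfl⟩
      rwa [coset_swallow hK (fun k => (hz₂ c k).2.1)] at h4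
    have h5 : u₁ ∈ lcoset (c*z₂) (K : Set α) := by
      rw [← hc1, comm u₂ c]; exact h3
    rcases h5 with ⟨k₆, hk₆, heq₆⟩
    have h7 : c*z₂ ∈ lcoset z₁ (K : Set α) := by
      have h8 : (c*z₂)*k₆ ∈ lcoset z₁ (K : Set α) := by
        rw [show (c*z₂)*k₆ = u₁ from heq₆]; exact h1
      exact (mem_lcoset_mul_k hK hz₁ hk₆ (c*z₂)).mpr h8
    set z₃ := rdiv z₁ z₂ with hz3def
    have hz₃ : z₃ ∈ upperCentral α (i+1) := (UC_isSub (i+1)).2.2.2 hz₁ hz₂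
    have hz32 : z₃ * z₂ = z₁ := rdiv_mul z₂ z₁
    have h9 : c*z₂ ∈ lcoset z₂ (lcoset z₃ (K : Set α)) := by
      rw [coset_swallow hK (fun k => (hz₂ z₃ k).2.2), comm z₂ z₃, hz32]
      exact h7
    rcases h9 with ⟨v, hv, heq₉⟩
    have heq₉' : z₂ * v = z₂ * c := by
      rw [show z₂ * v = c * z₂ from heq₉, comm c z₂]
    have h10 : v = c := mul_left_cancel heq₉'
    exact ⟨z₃, hz₃, h10 ▸ hv⟩

lemma Psub_normal {K : Subloop α} {i : ℕ} (hK : upperCentral α i ⊆ (K : Set α)) :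
    K.IsNormalIn (Psub K i hK) := by
  constructor
  · intro k hk
    exact ⟨1, one_mem_UC (i+1), ⟨k, hk, MLoop.one_mul k⟩⟩
  · rintro x ⟨z₁, hz₁, h1⟩ y ⟨z₂, hz₂, h2⟩
    rcases h2 with ⟨k₂, hk₂, heq₂⟩
    have e1 : lcoset y (K : Set α) = lcoset z₂ (K : Set α) := by
      rw [← heq₂, lcoset_mul_k hK hz₂ hk₂]
    have e2 : lcoset x (lcoset z₂ (K : Set α)) = lcoset (x*z₂) (K : Set α) :=
      coset_swallow hK (fun k => (hz₂ x k).2.1)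
    have h2' : y ∈ lcoset z₂ (K : Set α) := ⟨k₂, hk₂, heq₂⟩
    have e3 : lcoset (x*z₂) (K : Set α) = lcoset (z₂*z₁) (K : Set α) :=
      (key_shift hK hz₁ hz₂ h1).2
    have e4 : lcoset (x*y) (K : Set α) = lcoset (z₂*z₁) (K : Set α) := by
      have hm : x * y ∈ lcoset (z₂*z₁) (K : Set α) := Pcar_mul hK hz₁ hz₂ h1 h2'
      rcases hm with ⟨k₉, hk₉, heq₉⟩
      rw [← heq₉, lcoset_mul_k hK ((UC_isSub (i+1)).2.1 hz₂ hz₁) hk₉]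
    rw [e1, e2, e3, e4]

lemma mem_top_subloop (x : α) : x ∈ (⊤ : Subloop α) := trivial

/-- Part 1 of Proposition 4. -/
lemma part1 {n : ℕ} (hn : upperCentral α n = Set.univ)
    (H : ℕ → Subloop α)
    (hH : ∀ i, (H i).IsNormalIn (H (i + 1)) ∧
        ∀ P : Subloop α, (H i).IsNormalIn P → P ≤ H (i + 1)) :
    (∀ i, upperCentral α i ⊆ (H i : Set α)) ∧ H n = ⊤ := by
  have main : ∀ i, upperCentral α i ⊆ (H i : Set α) := by
    intro i
    induction i with
    | zero =>
      rintro x rfl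
      exact (H 0).one_mem'
    | succ i ih =>
      have hP : (H i).IsNormalIn (Psub (H i) i ih) := Psub_normal ih
      have hle : Psub (H i) i ih ≤ H (i+1) := (hH i).2 _ hP
      intro z hz
      exact hle ⟨z, hz, self_mem_lcoset (H i).one_mem' z⟩
  refine ⟨main, ?_⟩
  apply SetLike.ext
  intro x
  constructor
  · intro _; exact mem_top_subloop x
  · intro _
    exact main n (by rw [hn]; trivial)

end Part1

end Prop4

namespace Prop4

open MLoop

section Part2a

variable {α : Type u} [CommMoufangLoop α]

/-- left translation as an element of the multiplication group -/
noncomputable def LT (a : α) : ↥(multGroup α) := ⟨leftTrans a, leftTrans_mem a⟩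

lemma LT_apply (a x : α) : (LT a).1 x = a * x := rfl

lemma LT_inv_apply (a x : α) : ((LT a)⁻¹).1 x = ldiv a x := rfl

lemma coe_mul_apply (θ ψ : ↥(multGroup α)) (x : α) :
    (θ * ψ).1 x = θ.1 (ψ.1 x) := rfl

lemma apply_inv_apply (θ : ↥(multGroup α)) (x : α) :
    θ.1 ((θ⁻¹).1 x) = x := Equiv.apply_symm_apply θ.1 x

lemma inv_apply_apply (θ : ↥(multGroup α)) (x : α) :
    (θ⁻¹).1 (θ.1 x) = x := Equiv.symm_apply_apply θ.1 x

/-- induction principle for the multiplication group of a CML -/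
lemma MInd {p : ↥(multGroup α) → Prop} (gen : ∀ a : α, p (LT a)) (one : p 1)
    (mul : ∀ f g, p f → p g → p (f * g)) (inv : ∀ f, p f → p f⁻¹) :
    ∀ g, p g := by
  rintro ⟨f, hf⟩
  refine Subgroup.closure_induction (p := fun x hx => p ⟨x, hx⟩)
    ?_ one (fun x y hx hy px py => mul ⟨x, hx⟩ ⟨y, hy⟩ px py)
    (fun x hx px => inv ⟨x, hx⟩ px) hf
  intro x hx
  rcases hx with ⟨a, rfl⟩ | ⟨a, rfl⟩
  · exact gen a
  · have h : (⟨rightTrans a, Subgroup.subset_closure (Or.inr ⟨a, rfl⟩)⟩ :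
        ↥(multGroup α)) = LT a := Subtype.ext (rightTrans_eq a)
    rw [h]
    exact gen a

/-- translations move congruence classes into congruence classes -/
lemma mul_shift {j : ℕ} (hj : IsSub (upperCentral α j)) (c x : α) {t : α}
    (ht : t ∈ upperCentral α j) :
    c * (x * t) ∈ lcoset (c * x) (upperCentral α j) := by
  rw [← nlem hj]
  exact ⟨x * t, req_of ht, rfl⟩

/-- every element of the multiplication group preserves the partition into
congruence classes mod `UC j` -/
lemma cls_pres {j : ℕ} (g : ↥(multGroup α)) :
    ∀ x t, t ∈ upperCentral α j →
      g.1 (x * t) ∈ lcoset (g.1 x) (upperCentral α j) ∧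
      (g⁻¹).1 (x * t) ∈ lcoset ((g⁻¹).1 x) (upperCentral α j) := by
  have hj := UC_isSub (α := α) j
  induction g using MInd with
  | gen a =>
    intro x t ht
    constructor
    · exact mul_shift hj a x ht
    · rw [LT_inv_apply, LT_inv_apply, ldiv_eq, ldiv_eq]
      exact mul_shift hj (inv a) x ht
  | one =>
    intro x t ht
    refine ⟨req_of ht, ?_⟩
    rw [inv_one]
    exact req_of ht
  | mul f g hf hg =>
    intro x t ht
    constructor
    · rcases (hg x t ht).1 with ⟨t', ht', heq⟩
      show f.1 (g.1 (x * t)) ∈ lcoset (f.1 (g.1 x)) (upperCentral α j)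
      rw [← show (g.1 x) * t' = g.1 (x * t) from heq]
      exact (hf (g.1 x) t' ht').1
    · rw [mul_inv_rev]
      rcases (hf x t ht).2 with ⟨t', ht', heq⟩
      show (g⁻¹).1 ((f⁻¹).1 (x * t)) ∈ lcoset ((g⁻¹).1 ((f⁻¹).1 x)) (upperCentral α j)
      rw [← show ((f⁻¹).1 x) * t' = (f⁻¹).1 (x * t) from heq]
      exact (hg ((f⁻¹).1 x) t' ht').2
  | inv f hf =>
    intro x t ht
    refine ⟨(hf x t ht).2, ?_⟩
    rw [inv_inv]
    exact (hf x t ht).1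

/-- the subgroup `K_j` of elements moving every point within its `UC j` class -/
noncomputable def MKsub (j : ℕ) : Subgroup ↥(multGroup α) where
  carrier := {θ | ∀ x, θ.1 x ∈ lcoset x (upperCentral α j)}
  one_mem' := fun x => self_mem_lcoset (one_mem_UC j) x
  mul_mem' := by
    intro θ ψ hθ hψ x
    have hj := UC_isSub (α := α) j
    rcases hψ x with ⟨t, ht, heq⟩
    show θ.1 (ψ.1 x) ∈ lcoset x (upperCentral α j)
    rw [← show x * t = ψ.1 x from heq]
    have h1 := (cls_pres θ x t ht).1
    have h2 : lcoset (θ.1 x) (upperCentral α j) = lcoset x (upperCentral α j) :=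
      (class_eq hj (hθ x)).symm
    rwa [h2] at h1
  inv_mem' := by
    intro θ hθ x
    have hj := UC_isSub (α := α) j
    have h1 := hθ ((θ⁻¹).1 x)
    rw [apply_inv_apply] at h1
    exact req_symm hj h1

lemma mem_MKsub {j : ℕ} {θ : ↥(multGroup α)} :
    θ ∈ MKsub j ↔ ∀ x, θ.1 x ∈ lcoset x (upperCentral α j) := Iff.rfl

lemma MKsub_zero_le_bot : (MKsub (α := α) 0) ≤ ⊥ := by
  intro θ hθ
  rw [Subgroup.mem_bot]
  apply Subtype.ext
  apply Equiv.ext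
  intro x
  rcases hθ x with ⟨t, ht, heq⟩
  rcases ht with rfl
  have heq' : x * 1 = θ.1 x := heq
  rw [MLoop.mul_one] at heq'
  exact heq'.symm

/-- core computation for commutators with central-mod translations -/
lemma C1core {j : ℕ} {z : α} (hz : z ∈ upperCentral α (j+1)) (g : ↥(multGroup α)) :
    ∀ y, g.1 (z * ((g⁻¹).1 y)) ∈ lcoset (z * y) (upperCentral α j) ∧
      (g⁻¹).1 (z * (g.1 y)) ∈ lcoset (z * y) (upperCentral α j) := by
  have hj := UC_isSub (α := α) j
  have key : ∀ a w : α, Req j (z * (a * w)) (a * (z * w)) := by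
    intro a w
    have s₁ : loopAssociator z a w ∈ upperCentral α j := (hz a w).2.2
    have s₂ : loopAssociator a z w ∈ upperCentral α j := (hz a w).2.1
    have h1 : Req j (z*(a*w)) ((z*a)*w) := req_assoc s₁
    have h2 : Req j ((a*z)*w) (a*(z*w)) := req_symm hj (req_assoc s₂)
    rw [comm z a] at h1
    exact req_trans hj h1 h2
  induction g using MInd with
  | gen a =>
    intro y
    constructor
    · rw [LT_inv_apply, LT_apply, ldiv_eq]
      have h0 : z * y = z * (a * (inv a * y)) := by
        rw [← ldiv_eq, mul_ldiv]
      rw [h0]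
      exact key a (inv a * y)
    · rw [LT_inv_apply, LT_apply, ldiv_eq]
      rcases req_symm hj (key a y) with ⟨t', ht', heq'⟩
      rw [← show (a*(z*y))*t' = z*(a*y) from heq']
      have h1 := mul_shift hj (inv a) (a*(z*y)) ht'
      rwa [IP] at h1
  | one =>
    intro y
    constructor
    · rw [inv_one]
      exact self_mem_lcoset (one_mem_UC j) _
    · rw [inv_one]
      exact self_mem_lcoset (one_mem_UC j) _
  | mul f g hf hg =>
    intro y
    constructor
    · rw [mul_inv_rev]
      show f.1 (g.1 (z * ((g⁻¹).1 ((f⁻¹).1 y)))) ∈ lcoset (z*y) (upperCentral α j)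
      rcases (hg ((f⁻¹).1 y)).1 with ⟨t, ht, heq⟩
      rw [← show (z * ((f⁻¹).1 y)) * t = g.1 (z * ((g⁻¹).1 ((f⁻¹).1 y))) from heq]
      have h1 := (cls_pres f (z * ((f⁻¹).1 y)) t ht).1
      have h2 := (hf y).1
      rwa [← class_eq hj h2] at h1
    · rw [mul_inv_rev]
      show (g⁻¹).1 ((f⁻¹).1 (z * (f.1 (g.1 y)))) ∈ lcoset (z*y) (upperCentral α j)
      rcases (hf (g.1 y)).2 with ⟨t, ht, heq⟩
      rw [← show (z * (g.1 y)) * t = (f⁻¹).1 (z * (f.1 (g.1 y))) from heq]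
      have h1 := (cls_pres g (z * (g.1 y)) t ht).2
      have h2 := (hg y).2
      rwa [← class_eq hj h2] at h1
  | inv f hf =>
    intro y
    refine ⟨(hf y).2, ?_⟩
    rw [inv_inv]
    exact (hf y).1

end Part2a

end Prop4

namespace Prop4

open MLoop

section Aut

variable {α : Type u} [CommMoufangLoop α]

/-- the inner mapping `L(x,y)` -/
noncomputable def linner (x y : α) : Equiv.Perm α :=
  (leftTrans (x*y))⁻¹ * (leftTrans x * leftTrans y)

lemma linner_apply (x y u : α) : linner x y u = ldiv (x*y) (x*(y*u)) := rfl

/-- the subgroup generated by the inner mappings `L(x,y)` -/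
noncomputable def Jgrp : Subgroup (Equiv.Perm α) :=
  Subgroup.closure {f | ∃ x y : α, f = linner x y}

/-- multiplicativity for a permutation of the loop -/
def IsMulAut (f : Equiv.Perm α) : Prop := ∀ u v : α, f (u*v) = f u * f v

lemma aut_one : IsMulAut (1 : Equiv.Perm α) := fun _ _ => rfl

lemma aut_mul {f g : Equiv.Perm α} (hf : IsMulAut f) (hg : IsMulAut g) :
    IsMulAut (f * g) := by
  intro u v
  show f (g (u*v)) = f (g u) * f (g v)
  rw [hg, hf]

lemma aut_inv {f : Equiv.Perm α} (hf : IsMulAut f) : IsMulAut f⁻¹ := by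
  intro u v
  have h : f (f⁻¹ u * f⁻¹ v) = u * v := by
    rw [hf]; simp
  rw [← h]; simp

lemma linner_aut (x y : α) : IsMulAut (linner x y) := by
  intro u v
  set a := inv (x*y) with ha
  have hl : ∀ w, linner x y w = a * (x*(y*w)) := by
    intro w; rw [linner_apply, ldiv_eq]
  rw [hl, hl, hl]
  -- RHS
  have r1 : (a*(x*(y*u))) * (a*(x*(y*v))) = (a*a) * ((x*(y*u))*(x*(y*v))) :=
    (moufang a (x*(y*u)) (x*(y*v))).symm
  have r2 : (x*(y*u))*(x*(y*v)) = (x*x)*((y*u)*(y*v)) :=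
    (moufang x (y*u) (y*v)).symm
  have r3 : (y*u)*(y*v) = (y*y)*(u*v) := (moufang y u v).symm
  -- LHS
  have l1 : a * (x*(y*(u*v))) = (a*a) * (inv a * (x*(y*(u*v)))) :=
    (D a (x*(y*(u*v)))).symm
  have l2 : inv a = x*y := inv_invol (x*y)
  have l3 : (x*y) * (x*(y*(u*v))) = (x*x)*(y*(y*(u*v))) :=
    (moufang x y (y*(u*v))).symm
  have l4 : y*(y*(u*v)) = (y*y)*(u*v) := x_xz y (u*v)
  rw [r1, r2, r3, l1, l2, l3, l4]

lemma J_aut {f : Equiv.Perm α} (hf : f ∈ Jgrp) : IsMulAut f := by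
  refine Subgroup.closure_induction (p := fun g _ => IsMulAut g) ?_ aut_one
    (fun g h _ _ hg hh => aut_mul hg hh) (fun g _ hg => aut_inv hg) hf
  rintro g ⟨x, y, rfl⟩
  exact linner_aut x y

lemma J_fix_one {f : Equiv.Perm α} (hf : f ∈ Jgrp) : f 1 = 1 := by
  refine Subgroup.closure_induction (p := fun g _ => g 1 = 1) ?_ rfl
    (fun g h _ _ hg hh => by show g (h 1) = 1; rw [hh, hg])
    (fun g _ hg => by
      show g⁻¹ 1 = 1
      conv_lhs => rw [← hg]
      exact Equiv.symm_apply_apply g 1) hf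
  rintro g ⟨x, y, rfl⟩
  rw [linner_apply, MLoop.mul_one, ldiv_self]

lemma aut_conj {f : Equiv.Perm α} (hf : IsMulAut f) (w : α) :
    f * leftTrans w = leftTrans (f w) * f := by
  apply Equiv.ext
  intro x
  show f (w * x) = f w * f x
  exact hf w x

lemma leftTrans_mul (a b : α) :
    leftTrans a * leftTrans b = leftTrans (a*b) * linner a b := by
  rw [linner]
  group

/-- decomposition of multiplication group elements -/
lemma DEC {f : Equiv.Perm α} (hf : f ∈ multGroup α) :
    ∃ w : α, ∃ j ∈ Jgrp (α := α), f = leftTrans w * j := by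
  refine Subgroup.closure_induction
    (p := fun g _ => ∃ w : α, ∃ j ∈ Jgrp (α := α), g = leftTrans w * j) ?_ ?_ ?_ ?_ hf
  · rintro g (⟨a, rfl⟩ | ⟨a, rfl⟩)
    · exact ⟨a, 1, Subgroup.one_mem _, (_root_.mul_one _).symm⟩
    · rw [rightTrans_eq]
      exact ⟨a, 1, Subgroup.one_mem _, (_root_.mul_one _).symm⟩
  · exact ⟨1, 1, Subgroup.one_mem _, by rw [leftTrans_one, _root_.one_mul]⟩
  · rintro g h _ _ ⟨w₁, j₁, hj₁, rfl⟩ ⟨w₂, j₂, hj₂, rfl⟩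
    refine ⟨w₁ * (j₁ w₂), linner w₁ (j₁ w₂) * (j₁ * j₂),
      Subgroup.mul_mem _ (Subgroup.subset_closure ⟨_, _, rfl⟩)
        (Subgroup.mul_mem _ hj₁ hj₂), ?_⟩
    have h1 : j₁ * leftTrans w₂ = leftTrans (j₁ w₂) * j₁ := aut_conj (J_aut hj₁) w₂
    calc leftTrans w₁ * j₁ * (leftTrans w₂ * j₂)
        = leftTrans w₁ * (j₁ * leftTrans w₂) * j₂ := by group
      _ = leftTrans w₁ * (leftTrans (j₁ w₂) * j₁) * j₂ := by rw [h1]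
      _ = (leftTrans w₁ * leftTrans (j₁ w₂)) * (j₁ * j₂) := by group
      _ = (leftTrans (w₁ * (j₁ w₂)) * linner w₁ (j₁ w₂)) * (j₁ * j₂) := by
            rw [leftTrans_mul]
      _ = leftTrans (w₁ * (j₁ w₂)) * (linner w₁ (j₁ w₂) * (j₁ * j₂)) := by group
  · rintro g _ ⟨w, j, hj, rfl⟩
    refine ⟨j⁻¹ (inv w), j⁻¹, Subgroup.inv_mem _ hj, ?_⟩
    have h1 : j⁻¹ * leftTrans (inv w) = leftTrans (j⁻¹ (inv w)) * j⁻¹ :=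
      aut_conj (aut_inv (J_aut hj)) (inv w)
    rw [mul_inv_rev, leftTrans_inv, h1]

/-- every element of the multiplication group fixing `1` is multiplicative -/
lemma AUT {f : Equiv.Perm α} (hf : f ∈ multGroup α) (h1 : f 1 = 1) :
    IsMulAut f := by
  rcases DEC hf with ⟨w, j, hj, rfl⟩
  have h2 : w * (j 1) = 1 := h1
  rw [J_fix_one hj, MLoop.mul_one] at h2
  have : leftTrans w * j = j := by rw [h2, leftTrans_one, _root_.one_mul]
  rw [this]
  exact J_aut hj

end Aut

end Prop4

namespace Prop4

open MLoop
open scoped commutatorElement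

section Ladder

variable {α : Type u} [CommMoufangLoop α]

/-- the subgroup `T_{j+1}` generated by `K_j` and translations by `UC (j+1)` -/
noncomputable def Tgen (j : ℕ) : Set ↥(multGroup α) :=
  (MKsub (α := α) j : Set ↥(multGroup α)) ∪
    {θ : ↥(multGroup α) | ∃ z ∈ upperCentral α (j+1), θ = LT z}

noncomputable def Tsub (j : ℕ) : Subgroup ↥(multGroup α) :=
  Subgroup.closure (Tgen j)

lemma MK_le_T {j : ℕ} : MKsub (α := α) j ≤ Tsub j :=
  fun _ hθ => Subgroup.subset_closure (Set.mem_union_left _ hθ)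

lemma LT_mem_T {j : ℕ} {z : α} (hz : z ∈ upperCentral α (j+1)) :
    LT z ∈ Tsub j :=
  Subgroup.subset_closure (Set.mem_union_right _ ⟨z, hz, rfl⟩)

/-- commutators with translations by `UC (j+1)` land in `K_j` -/
lemma C1 {j : ℕ} {z : α} (hz : z ∈ upperCentral α (j+1)) (g : ↥(multGroup α)) :
    ⁅g, LT z⁆ ∈ MKsub j := by
  intro x
  show g.1 ((LT z).1 ((g⁻¹).1 (((LT z)⁻¹).1 x))) ∈ lcoset x (upperCentral α j)
  rw [LT_inv_apply, LT_apply]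
  have h1 := (C1core hz g (ldiv z x)).1
  rwa [mul_ldiv] at h1

lemma MK_conj {j : ℕ} {θ : ↥(multGroup α)} (hθ : θ ∈ MKsub j) (g : ↥(multGroup α)) :
    g * θ * g⁻¹ ∈ MKsub j := by
  intro x
  have hj := UC_isSub (α := α) j
  show g.1 (θ.1 ((g⁻¹).1 x)) ∈ lcoset x (upperCentral α j)
  rcases hθ ((g⁻¹).1 x) with ⟨t, ht, heq⟩
  rw [← show ((g⁻¹).1 x) * t = θ.1 ((g⁻¹).1 x) from heq]
  have h1 := (cls_pres g ((g⁻¹).1 x) t ht).1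
  rwa [apply_inv_apply] at h1

lemma T_conj {j : ℕ} {θ : ↥(multGroup α)} (hθ : θ ∈ Tsub j) (g : ↥(multGroup α)) :
    g * θ * g⁻¹ ∈ Tsub j := by
  have hθ' : θ ∈ Subgroup.closure (Tgen (α := α) j) := hθ
  refine Subgroup.closure_induction
    (p := fun ψ _ => g * ψ * g⁻¹ ∈ Tsub j) ?_ ?_ ?_ ?_ hθ'
  · rintro ψ (hψ | ⟨z, hz, rfl⟩)
    · exact MK_le_T (MK_conj hψ g)
    · show g * LT z * g⁻¹ ∈ Tsub j
      have h1 : g * LT z * g⁻¹ = ⁅g, LT z⁆ * LT z := by group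
      rw [h1]
      exact Subgroup.mul_mem _ (MK_le_T (C1 hz g)) (LT_mem_T hz)
  · show g * 1 * g⁻¹ ∈ Tsub j
    have : g * 1 * g⁻¹ = 1 := by group
    rw [this]; exact Subgroup.one_mem _
  · intro ψ₁ ψ₂ _ _ h1 h2
    show g * (ψ₁ * ψ₂) * g⁻¹ ∈ Tsub j
    have : g * (ψ₁ * ψ₂) * g⁻¹ = (g * ψ₁ * g⁻¹) * (g * ψ₂ * g⁻¹) := by group
    rw [this]; exact Subgroup.mul_mem _ h1 h2
  · intro ψ _ h1
    show g * ψ⁻¹ * g⁻¹ ∈ Tsub j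
    have : g * ψ⁻¹ * g⁻¹ = (g * ψ * g⁻¹)⁻¹ := by group
    rw [this]; exact Subgroup.inv_mem _ h1

/-- the crux : commutators of translations with elements of `K_{j+1}`
lie in `T_{j+1}` -/
lemma crux {j : ℕ} {θ : ↥(multGroup α)} (hθ : θ ∈ MKsub (j+1)) (a : α) :
    ⁅LT a, θ⁆ ∈ Tsub j := by
  have hj := UC_isSub (α := α) j
  have hj1 := UC_isSub (α := α) (j+1)
  set w := θ.1 1 with hwdef
  have hw : w ∈ upperCentral α (j+1) := by
    rcases hθ 1 with ⟨t, ht, heq⟩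
    have : (1 : α) * t = w := heq
    rwa [← this, MLoop.one_mul]
  set jm := (LT w)⁻¹ * θ with hjmdef
  have hjm1 : jm.1 1 = 1 := by
    show ldiv w (θ.1 1) = 1
    rw [← hwdef, ldiv_self]
  have haut : IsMulAut jm.1 := AUT jm.2 hjm1
  have hjmx : ∀ x, jm.1 x = ldiv w (θ.1 x) := fun x => rfl
  have he : ∀ x : α, ldiv x (jm.1 x) ∈ upperCentral α (j+1) := by
    intro x
    rw [ldiv_mem_iff]
    rcases hθ x with ⟨t, ht, heq⟩
    rw [hjmx, ← show x * t = θ.1 x from heq, ldiv_eq]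
    have h1 := mul_shift hj1 (inv w) x ht
    have h2 : inv w * x ∈ lcoset x (upperCentral α (j+1)) := by
      rw [comm]
      exact req_of (inv_mem_UC hw)
    rwa [← class_eq hj1 h2] at h1
  set e : α → α := fun x => ldiv x (jm.1 x) with hedef
  have hjx : ∀ x, jm.1 x = x * e x := fun x => (mul_ldiv x _).symm
  set z₀ := e (inv a) with hz0def
  have hz₀ : z₀ ∈ upperCentral α (j+1) := he (inv a)
  set ψ := ⁅LT a, jm⁆ with hψdef
  have hpoint : ∀ x, ψ.1 x ∈ lcoset (z₀ * x) (upperCentral α j) := by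
    intro x
    set u := (jm⁻¹).1 x with hudef
    have hx : x = u * e u := by
      rw [← hjx u, hudef, apply_inv_apply]
    have happ : ψ.1 x = a * ((inv a * z₀) * (u * e u)) := by
      show (LT a).1 (jm.1 (((LT a)⁻¹).1 ((jm⁻¹).1 x))) = _
      rw [LT_inv_apply, ldiv_eq, ← hudef, haut (inv a) u, hjx (inv a), hjx u, LT_apply,
        ← hz0def]
    have hs : loopAssociator (inv a) z₀ (u * e u) ∈ upperCentral α j := (hz₀ (inv a) (u * e u)).2.1
    have step1 : Req j ((inv a) * (z₀ * (u * e u))) ((inv a * z₀) * (u * e u)) :=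
      req_assoc hs
    have step2 : Req j (a * ((inv a) * (z₀ * (u * e u)))) (a * ((inv a * z₀) * (u * e u))) :=
      req_mull hj a step1
    rw [IP'] at step2
    rw [happ, hx]
    exact step2
  have hκ : (LT z₀)⁻¹ * ψ ∈ MKsub j := by
    intro x
    show ldiv z₀ (ψ.1 x) ∈ lcoset x (upperCentral α j)
    rcases hpoint x with ⟨t, ht, heq⟩
    rw [← show (z₀ * x) * t = ψ.1 x from heq, ldiv_eq]
    have h1 := mul_shift hj (inv z₀) (z₀ * x) ht
    rwa [IP] at h1
  have hψT : ψ ∈ Tsub j := by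
    have : ψ = LT z₀ * ((LT z₀)⁻¹ * ψ) := by group
    rw [this]
    exact Subgroup.mul_mem _ (LT_mem_T hz₀) (MK_le_T hκ)
  have hθdec : θ = LT w * jm := by rw [hjmdef]; group
  have hcomm : ⁅LT a, θ⁆ = ⁅LT a, LT w⁆ * (LT w * ⁅LT a, jm⁆ * (LT w)⁻¹) := by
    rw [hθdec]
    group
  rw [hcomm]
  exact Subgroup.mul_mem _ (MK_le_T (C1 hw (LT a))) (T_conj hψT (LT w))

/-- commutators of anything with `K_{j+1}` lie in `T_{j+1}` -/
lemma commMK {j : ℕ} {θ : ↥(multGroup α)} (hθ : θ ∈ MKsub (j+1)) :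
    ∀ g : ↥(multGroup α), ⁅g, θ⁆ ∈ Tsub j := by
  intro g
  induction g using MInd with
  | gen a => exact crux hθ a
  | one =>
    have : ⁅(1 : ↥(multGroup α)), θ⁆ = 1 := by group
    rw [this]; exact Subgroup.one_mem _
  | mul f g hf hg =>
    have : ⁅f * g, θ⁆ = (f * ⁅g, θ⁆ * f⁻¹) * ⁅f, θ⁆ := by group
    rw [this]
    exact Subgroup.mul_mem _ (T_conj hg f) hf
  | inv f hf =>
    have : ⁅f⁻¹, θ⁆ = f⁻¹ * ⁅f, θ⁆⁻¹ * (f⁻¹)⁻¹ := by group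
    rw [this]
    exact T_conj (Subgroup.inv_mem _ hf) f⁻¹

/-- the ladder : `K_j ≤ Z_{2j}(𝔐)` and `T_{j+1} ≤ Z_{2j+1}(𝔐)` -/
lemma ladder : ∀ j : ℕ,
    MKsub (α := α) j ≤ Subgroup.upperCentralSeries ↥(multGroup α) (2*j) ∧
    Tsub (α := α) j ≤ Subgroup.upperCentralSeries ↥(multGroup α) (2*j+1) := by
  intro j
  induction j with
  | zero =>
    constructor
    · intro θ hθ
      have := MKsub_zero_le_bot hθ
      rw [Subgroup.mem_bot] at this
      rw [this]
      exact Subgroup.one_mem _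
    · apply (Subgroup.closure_le _).mpr
      rintro θ (hθ | ⟨z, hz, rfl⟩)
      · have := MKsub_zero_le_bot hθ
        rw [Subgroup.mem_bot] at this
        rw [this]
        exact Subgroup.one_mem _
      · rw [SetLike.mem_coe, mem_upperCentralSeries_succ_iff]
        intro y
        have h1 : ⁅y, LT z⁆ ∈ MKsub 0 := C1 hz y
        have h2 := MKsub_zero_le_bot h1
        rw [Subgroup.mem_bot] at h2
        have h3 : LT z * y * (LT z)⁻¹ * y⁻¹ = ⁅y, LT z⁆⁻¹ := by
          rw [commutatorElement_def]; group
        rw [commutatorElement_def, h3, h2, inv_one]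
        exact Subgroup.one_mem _
  | succ j ih =>
    have hMK : MKsub (α := α) (j+1) ≤ Subgroup.upperCentralSeries ↥(multGroup α) (2*j+2) := by
      intro θ hθ
      rw [show 2*j+2 = (2*j+1)+1 from rfl, mem_upperCentralSeries_succ_iff]
      intro y
      have h1 : ⁅y, θ⁆ ∈ Tsub j := commMK hθ y
      have h3 : θ * y * θ⁻¹ * y⁻¹ = ⁅y, θ⁆⁻¹ := by
        rw [commutatorElement_def]; group
      rw [commutatorElement_def, h3]
      exact ih.2 (Subgroup.inv_mem _ h1)
    refine ⟨hMK, ?_⟩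
    apply (Subgroup.closure_le _).mpr
    rintro θ (hθ | ⟨z, hz, rfl⟩)
    · exact upperCentralSeries_mono _ (Nat.le_succ _) (hMK hθ)
    · rw [SetLike.mem_coe]
      rw [show 2*(j+1)+1 = (2*j+2)+1 from rfl, mem_upperCentralSeries_succ_iff]
      intro y
      have h1 : ⁅y, LT z⁆ ∈ MKsub (j+1) := C1 hz y
      have h3 : LT z * y * (LT z)⁻¹ * y⁻¹ = ⁅y, LT z⁆⁻¹ := by
        rw [commutatorElement_def]; group
      rw [commutatorElement_def, h3]
      exact hMK (Subgroup.inv_mem _ h1)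

/-- when `UC (m+1) = univ`, `T_{m+1}` is everything -/
lemma T_top' {m : ℕ} (hn : upperCentral α (m+1) = Set.univ) :
    ∀ g, g ∈ Tsub (α := α) m := by
  intro g
  induction g using MInd with
  | gen a =>
    apply LT_mem_T
    rw [hn]; trivial
  | one => exact Subgroup.one_mem _
  | mul f g hf hg => exact Subgroup.mul_mem _ hf hg
  | inv f hf => exact Subgroup.inv_mem _ hf

lemma T_top {m : ℕ} (hn : upperCentral α (m+1) = Set.univ) :
    Tsub (α := α) m = ⊤ := by
  rw [eq_top_iff]
  intro g _
  exact T_top' hn g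

/-- normalizer chains reach the top in a group whose upper central series
reaches the top -/
lemma normalizer_chain {G : Type v} [Group G] {m : ℕ}
    (h : Subgroup.upperCentralSeries G m = ⊤) (N : ℕ → Subgroup G)
    (hN : ∀ i, N (i+1) = Subgroup.normalizer (N i : Set G)) : N m = ⊤ := by
  have key : ∀ i, Subgroup.upperCentralSeries G i ≤ N i := by
    intro i
    induction i with
    | zero => rw [upperCentralSeries_zero]; exact bot_le
    | succ i ih =>
      intro z hz
      rw [hN i, Subgroup.mem_normalizer_iff]
      intro h'
      constructor
      · intro hh
        have hc : z * h' * z⁻¹ * h'⁻¹ ∈ Subgroup.upperCentralSeries G i :=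
          mem_upperCentralSeries_succ_iff.mp hz h'
        have : z * h' * z⁻¹ = (z * h' * z⁻¹ * h'⁻¹) * h' := by group
        rw [this]
        exact Subgroup.mul_mem _ (ih hc) hh
      · intro hh
        set w := z * h' * z⁻¹ with hwdef
        have hz' : z⁻¹ ∈ Subgroup.upperCentralSeries G (i+1) := Subgroup.inv_mem _ hz
        have hc : z⁻¹ * w * (z⁻¹)⁻¹ * w⁻¹ ∈ Subgroup.upperCentralSeries G i :=
          mem_upperCentralSeries_succ_iff.mp hz' w
        have : h' = (z⁻¹ * w * (z⁻¹)⁻¹ * w⁻¹) * w := by rw [hwdef]; group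
        rw [this]
        exact Subgroup.mul_mem _ (ih hc) hh
  rw [eq_top_iff, ← h]
  exact key m

end Ladder

end Prop4


/-- **Proposition 4.** If `L` is a centrally nilpotent commutative Moufang loop of
class `n` with multiplication group `𝔐`, then for every subloop `H` the series of
consecutive normalizers reaches `L` after at most `n` steps (indeed
`Z_i(L) ⊆ H_i` for every `i`), and for every subgroup `𝔑` of `𝔐` the series of
consecutive normalizers reaches `𝔐` after at most `2n - 1` steps. -/
theorem proposition4 (α : Type u) [CommMoufangLoop α] (n : ℕ)
    (hn : upperCentral α n = Set.univ)
    (hmin : ∀ m, m < n → upperCentral α m ≠ Set.univ) :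
    (∀ H : ℕ → Subloop α,
      (∀ i, (H i).IsNormalIn (H (i + 1)) ∧
        ∀ P : Subloop α, (H i).IsNormalIn P → P ≤ H (i + 1)) →
      (∀ i, upperCentral α i ⊆ (H i : Set α)) ∧ H n = ⊤) ∧
    (∀ N : ℕ → Subgroup ↥(multGroup α),
      (∀ i, N (i + 1) = Subgroup.normalizer (N i : Set ↥(multGroup α))) → N (2 * n - 1) = ⊤) := by
  constructor
  · intro H hH
    exact Prop4.part1 hn H hH
  · intro N hN
    cases n with
    | zero =>
      have htriv : ∀ x : α, x = 1 := by
        intro x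
        have : x ∈ upperCentral α 0 := by rw [hn]; trivial
        exact this
      rw [eq_top_iff]
      intro g _
      have : g = 1 := by
        apply Subtype.ext
        apply Equiv.ext
        intro x
        show g.1 x = x
        rw [htriv (g.1 x), htriv x]
      show g ∈ N (2 * 0 - 1)
      rw [this]
      exact Subgroup.one_mem _
    | succ m =>
      have h1 : Subgroup.upperCentralSeries ↥(multGroup α) (2*m+1) = ⊤ := by
        rw [eq_top_iff, ← Prop4.T_top hn]
        exact (Prop4.ladder m).2
      have harith : 2 * (m+1) - 1 = 2*m+1 := by omega
      rw [harith]
      exact Prop4.normalizer_chain h1 N hN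
end
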